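/- arXiv:1908.09323 — 13 statements merged into one kernel-verified Lean document; each statement's English description precedes it below -/
import Mathlib

section
/- Consider the system ẋ = f(x) on an open set D ⊆ ℝⁿ with f : D → ℝⁿ continuous, and let h : D → ℝ be continuously differentiable with S = {x ∈ D : h(x) ≥ 0} nonempty. If there exists a minimal function μ : ℝ → ℝ such that L_f h(x) ≥ −μ(h(x)) for all x ∈ D, then S is positively invariant: every solution x : [0,τ) → D of ẋ = f(x) with x(0) ∈ S satisfies x(t) ∈ S for all t ∈ [0,τ). -/
/-- A continuous function `μ : ℝ → ℝ` is a minimal function if for every `τ > 0`, every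
differentiable `w : [0,τ) → ℝ` with `w(0) = 0` and `ẇ(t) = −μ(w(t))` satisfies `w(t) ≥ 0`. -/
def IsMinimalFunction (μ : ℝ → ℝ) : Prop :=
  Continuous μ ∧
    ∀ τ : ℝ, 0 < τ → ∀ w : ℝ → ℝ, w 0 = 0 →
      (∀ t ∈ Set.Ico (0 : ℝ) τ, HasDerivAt w (-μ (w t)) t) →
      ∀ t ∈ Set.Ico (0 : ℝ) τ, 0 ≤ w t

/-!
If `h` became negative along a trajectory, then after the last zero `t₀` of `g(t) = h(x(t))`
the function `s ↦ g(t₀ + s)` would be a supersolution of `ẇ = −μ(w)` starting at `0` and negative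
right after. A continuous right-hand side does not give unique solutions, but it does give a local
solution lying below any supersolution with the same initial value: approximate `−μ` from below by
an increasing sequence of Lipschitz functions, solve the approximate equations by Picard–Lindelöf,
and pass to the limit of the resulting increasing sequence of solutions, each of which stays below
the supersolution by the Lipschitz comparison principle. That solution starts at `0` and becomes
negative, contradicting the minimality of `μ`.
-/

open Set Filter Topology MeasureTheory Interval
open scoped NNReal

theorem exists_last_zero {g : ℝ → ℝ} {a b : ℝ} (hab : a ≤ b) (hg : ContinuousOn g (Icc a b))
    (ha : 0 ≤ g a) (hb : g b < 0) : ∃ c ∈ Ico a b, g c = 0 ∧ ∀ t ∈ Ioc c b, g t < 0 := by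
  set S := Icc a b ∩ g ⁻¹' Ici 0
  have hS : IsClosed S := hg.preimage_isClosed_of_isClosed isClosed_Icc isClosed_Ici
  have hSbdd : BddAbove S := bddAbove_Icc.mono inter_subset_left
  have hcS : sSup S ∈ S := hS.csSup_mem ⟨a, ⟨le_rfl, hab⟩, ha⟩ hSbdd
  have hneg : ∀ t ∈ Ioc (sSup S) b, g t < 0 := fun t ht => not_le.mp fun hgt =>
    ht.1.not_ge (le_csSup hSbdd ⟨⟨hcS.1.1.trans ht.1.le, ht.2⟩, hgt⟩)
  obtain ⟨d, hd, hgd⟩ := intermediate_value_Icc' hcS.1.2 (hg.mono (Icc_subset_Icc_left hcS.1.1))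
    ⟨hb.le, hcS.2⟩
  have hdc : d = sSup S :=
    le_antisymm (le_csSup hSbdd ⟨⟨hcS.1.1.trans hd.1, hd.2⟩, hgd.ge⟩) hd.1
  refine ⟨sSup S, ⟨hcS.1.1, lt_of_le_of_ne hcS.1.2 ?_⟩, hdc ▸ hgd, hneg⟩
  rintro hcb
  exact hb.not_ge (hcb ▸ hcS.2)

theorem Polynomial.exists_lipschitzWith_eval_projIcc (p : Polynomial ℝ) {a b : ℝ} (hab : a ≤ b) :
    ∃ K, LipschitzWith K fun y => p.eval (projIcc a b hab y : ℝ) := by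
  obtain ⟨K, hK⟩ := ((p.contDiff_aeval 1).locallyLipschitz.locallyLipschitzOn (s := Icc a b)
    ).exists_lipschitzOnWith_of_compact isCompact_Icc
  refine ⟨K * (1 * 1), lipschitzOnWith_univ.mp ?_⟩
  exact hK.comp ((LipschitzWith.subtype_val _).comp (LipschitzWith.projIcc hab)).lipschitzOnWith
    fun y _ => (projIcc a b hab y).2

theorem exists_monotone_lipschitzWith_tendstoUniformly {f : ℝ → ℝ} {a b : ℝ} (hab : a ≤ b)
    (hf : ContinuousOn f (Icc a b)) :
    ∃ (F : ℕ → ℝ → ℝ) (L : ℝ≥0), (∀ k, ∃ K, LipschitzWith K (F k)) ∧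
      (∀ k y, F k y ≤ F (k + 1) y) ∧ (∀ k y, F k y ≤ f (projIcc a b hab y)) ∧
      (∀ k y, ‖F k y‖ ≤ L) ∧ TendstoUniformly F (fun y => f (projIcc a b hab y)) atTop := by
  obtain ⟨M, hM⟩ := isCompact_Icc.exists_bound_of_continuousOn hf
  choose p hp using fun k : ℕ =>
    exists_polynomial_near_of_continuousOn a b f hf ((1 / 3) ^ (k + 1)) (by positivity)
  -- Shifting down by twice the error makes the approximations increase with `k`.
  set F : ℕ → ℝ → ℝ := fun k y => (p k).eval (projIcc a b hab y : ℝ) - 2 * (1 / 3) ^ (k + 1)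
  have hF : ∀ k y, F k y ≤ F (k + 1) y ∧ F k y ≤ f (projIcc a b hab y) ∧
      f (projIcc a b hab y) ≤ F k y + (1 / 3) ^ k := fun k y => by
    have h₀ := abs_lt.mp (hp k _ (projIcc a b hab y).2)
    have h₁ := abs_lt.mp (hp (k + 1) _ (projIcc a b hab y).2)
    refine ⟨?_, ?_, ?_⟩ <;> simp only [F] <;> ring_nf at h₀ h₁ ⊢ <;>
      linarith [h₀.1, h₀.2, h₁.1, h₁.2]
  refine ⟨F, ‖M‖₊ + 1, fun k => ?_, fun k y => (hF k y).1, fun k y => (hF k y).2.1,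
    fun k y => ?_, ?_⟩
  · obtain ⟨K, hK⟩ := (p k).exists_lipschitzWith_eval_projIcc hab
    exact ⟨K + 0, hK.sub (LipschitzWith.const _)⟩
  · have hfM := abs_le.mp (hM _ (projIcc a b hab y).2)
    have hk : (1 / 3 : ℝ) ^ k ≤ 1 := pow_le_one₀ (by norm_num) (by norm_num)
    simp only [NNReal.coe_add, coe_nnnorm, NNReal.coe_one, Real.norm_eq_abs, abs_le]
    constructor <;> linarith [le_abs_self M, neg_abs_le M, (hF k y).2.1, (hF k y).2.2]
  · refine Metric.tendstoUniformly_iff.mpr fun ε hε => ?_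
    filter_upwards [(tendsto_pow_atTop_nhds_zero_of_lt_one (r := (1 / 3 : ℝ)) (by norm_num)
      (by norm_num)).eventually (gt_mem_nhds hε)] with k hk y
    rw [Real.dist_eq, abs_lt]
    constructor <;> linarith [(hF k y).2.1, (hF k y).2.2]

theorem le_of_subsolution_of_supersolution {F : ℝ → ℝ} {K : ℝ≥0} (hF : LipschitzWith K F)
    {a b : ℝ} {u v u' v' : ℝ → ℝ}
    (hu : ∀ t ∈ Icc a b, HasDerivWithinAt u (u' t) (Icc a b) t)
    (hv : ∀ t ∈ Icc a b, HasDerivWithinAt v (v' t) (Icc a b) t)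
    (hu' : ∀ t ∈ Ico a b, u' t ≤ F (u t)) (hv' : ∀ t ∈ Ico a b, F (v t) ≤ v' t)
    (ha : u a ≤ v a) : ∀ t ∈ Icc a b, u t ≤ v t := by
  have right_deriv : ∀ {g g' : ℝ → ℝ}, (∀ t ∈ Icc a b, HasDerivWithinAt g (g' t) (Icc a b) t) →
      ∀ t ∈ Ico a b, HasDerivWithinAt g (g' t) (Ici t) t := fun hg t ht =>
    (hg t (Ico_subset_Icc_self ht)).mono_of_mem_nhdsWithin (Icc_mem_nhdsGE_of_mem ht)
  intro t ht
  set E : ℝ → ℝ := fun s => Real.exp ((K + 1) * (s - a))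
  have hE : ∀ s, HasDerivAt E ((K + 1) * E s) s := fun s => by
    simpa [E, mul_comm] using (((hasDerivAt_id s).sub_const a).const_mul ((K : ℝ) + 1)).exp
  -- `v + ε E` is a strict supersolution, so `u` cannot catch up with it.
  have hε : ∀ ε > 0, u t ≤ v t + ε * E t := by
    intro ε hε
    refine image_le_of_deriv_right_lt_deriv_boundary' (B := fun s => v s + ε * E s)
      (fun s hs => (hu s hs).continuousWithinAt) (right_deriv hu) (by simp [E]; linarith)
      (fun s hs => ((hv s hs).add ((hE s).const_mul ε).hasDerivWithinAt).continuousWithinAt)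
      (right_deriv fun s hs => (hv s hs).add ((hE s).const_mul ε).hasDerivWithinAt)
      (fun s hs hus => ?_) ht
    have hEs : 0 < ε * E s := mul_pos hε (Real.exp_pos _)
    have hLip : F (u s) - F (v s) ≤ K * (ε * E s) := by
      have := hF.dist_le_mul (u s) (v s)
      rw [Real.dist_eq, Real.dist_eq, hus, add_sub_cancel_left, abs_of_pos hEs] at this
      rw [hus]
      exact (le_abs_self _).trans this
    nlinarith [hu' s hs, hv' s hs]
  refine le_of_forall_pos_le_add fun δ hδ => ?_
  have hEt : 0 < E t := Real.exp_pos _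
  simpa [div_mul_cancel₀ δ hEt.ne'] using hε (δ / E t) (div_pos hδ hEt)

theorem exists_hasDerivWithinAt_of_lipschitzWith_of_bounded {E : Type*} [NormedAddCommGroup E]
    [NormedSpace ℝ E] [CompleteSpace E] {F : E → E} {K L : ℝ≥0} (hF : LipschitzWith K F)
    (hFL : ∀ y, ‖F y‖ ≤ L) {T : ℝ} (hT : 0 ≤ T) (y₀ : E) :
    ∃ u : ℝ → E, u 0 = y₀ ∧ ∀ t ∈ Icc 0 T, HasDerivWithinAt u (F (u t)) (Icc 0 T) t := by
  have hPL : IsPicardLindelof (fun _ => F) (tmin := 0) (tmax := T) ⟨0, le_rfl, hT⟩ y₀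
      (L * T.toNNReal) 0 L K :=
    .of_time_independent (fun y _ => hFL y) hF.lipschitzOnWith (by simp [hT])
  exact hPL.exists_eq_forall_mem_Icc_hasDerivWithinAt₀

theorem exists_hasDerivAt_of_tendsto_solutions {F : ℕ → ℝ → ℝ} {f : ℝ → ℝ}
    (hFf : TendstoUniformly F f atTop) (hFc : ∀ k, Continuous (F k)) {L : ℝ≥0}
    (hFL : ∀ k y, ‖F k y‖ ≤ L) {T : ℝ} (hT : 0 ≤ T) {u : ℕ → ℝ → ℝ} {w : ℝ → ℝ}
    (hu : ∀ k, ∀ t ∈ Icc 0 T, HasDerivWithinAt (u k) (F k (u k t)) (Icc 0 T) t)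
    (huw : ∀ t ∈ Icc 0 T, Tendsto (fun k => u k t) atTop (𝓝 (w t))) :
    ∃ W : ℝ → ℝ, EqOn W w (Icc 0 T) ∧ ∀ t ∈ Icc 0 T, HasDerivAt W (f (W t)) t := by
  have hf : Continuous f := hFf.continuous (Frequently.of_forall hFc)
  have hu_cont : ∀ k, ContinuousOn (u k) (Icc 0 T) := fun k t ht =>
    (hu k t ht).continuousWithinAt
  have hw : LipschitzOnWith L w (Icc 0 T) := by
    refine LipschitzOnWith.of_dist_le_mul fun s hs t ht =>
      le_of_tendsto ((huw s hs).dist (huw t ht)) (Eventually.of_forall fun k => ?_)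
    exact ((convex_Icc 0 T).lipschitzOnWith_of_nnnorm_hasDerivWithin_le (hu k)
      fun t _ => hFL k _).dist_le_mul s hs t ht
  set proj : ℝ → ℝ := fun s => projIcc 0 T hT s
  have hw_proj : Continuous (w ∘ proj) :=
    hw.continuousOn.comp_continuous (continuous_subtype_val.comp continuous_projIcc)
      fun s => (projIcc 0 T hT s).2
  have hint : ∀ t ∈ Icc 0 T, w t = w 0 + ∫ s in 0..t, f (w (proj s)) := by
    intro t ht
    have hsub : Icc 0 t ⊆ Icc 0 T := Icc_subset_Icc_right ht.2
    have hIoc : Ι 0 t ⊆ Icc 0 T := uIoc_of_le ht.1 ▸ Ioc_subset_Icc_self.trans hsub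
    have hFu_cont : ∀ k, ContinuousOn (fun s => F k (u k s)) (Icc 0 t) := fun k =>
      (hFc k).comp_continuousOn ((hu_cont k).mono hsub)
    have hFTC : ∀ k, u k t = u k 0 + ∫ s in 0..t, F k (u k s) := by
      intro k
      rw [intervalIntegral.integral_eq_sub_of_hasDeriv_right_of_le ht.1 ((hu_cont k).mono hsub)
        (fun s hs => ((hu k s (Ioo_subset_Icc_self.trans hsub hs)).hasDerivAt
          (Icc_mem_nhds hs.1 (hs.2.trans_le ht.2))).hasDerivWithinAt)
        ((hFu_cont k).intervalIntegrable_of_Icc ht.1)]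
      ring
    have hDCT : Tendsto (fun k => ∫ s in 0..t, F k (u k s)) atTop
        (𝓝 (∫ s in 0..t, f (w (proj s)))) := by
      refine intervalIntegral.tendsto_integral_filter_of_dominated_convergence (fun _ => L)
        (Eventually.of_forall fun k => ?_) (Eventually.of_forall fun k => ae_of_all _
          fun s _ => hFL k _) intervalIntegrable_const (ae_of_all _ fun s hs => ?_)
      · exact (hFu_cont k).aestronglyMeasurable measurableSet_Icc |>.mono_set
          (uIoc_of_le ht.1 ▸ Ioc_subset_Icc_self)
      · simpa [proj, projIcc_of_mem hT (hIoc hs)] using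
          hFf.tendsto_comp hf.continuousAt (huw s (hIoc hs))
    refine tendsto_nhds_unique (huw t ht) ?_
    simpa only [hFTC] using (huw 0 ⟨le_rfl, hT⟩).add hDCT
  refine ⟨fun t => w 0 + ∫ s in 0..t, f (w (proj s)), fun t ht => (hint t ht).symm,
    fun t ht => ?_⟩
  have := ((hf.comp hw_proj).integral_hasStrictDerivAt 0 t).hasDerivAt.const_add (w 0)
  simpa [proj, projIcc_of_mem hT ht, ← hint t ht] using this

theorem exists_solution_projIcc_le_of_supersolution {F : ℝ → ℝ} {a b : ℝ} (hab : a ≤ b)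
    (hF : ContinuousOn F (Icc a b)) {G G' : ℝ → ℝ} {T : ℝ} (hT : 0 ≤ T)
    (hG : ∀ t ∈ Icc 0 T, HasDerivWithinAt G (G' t) (Icc 0 T) t)
    (hGab : ∀ t ∈ Icc 0 T, G t ∈ Icc a b) (hGF : ∀ t ∈ Icc 0 T, F (G t) ≤ G' t) :
    ∃ w : ℝ → ℝ, w 0 = G 0 ∧ (∀ t ∈ Icc 0 T, HasDerivAt w (F (projIcc a b hab (w t))) t) ∧
      ∀ t ∈ Icc 0 T, w t ≤ G t := by
  obtain ⟨Fk, L, hK, hmono, hFkF, hFkL, hunif⟩ :=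
    exists_monotone_lipschitzWith_tendstoUniformly hab hF
  choose K hK using hK
  choose u hu₀ hu using fun k =>
    exists_hasDerivWithinAt_of_lipschitzWith_of_bounded (hK k) (hFkL k) hT (G 0)
  have huG : ∀ k, ∀ t ∈ Icc 0 T, u k t ≤ G t := fun k =>
    le_of_subsolution_of_supersolution (hK k) (hu k) hG (fun t _ => le_rfl)
      (fun t ht => (hFkF k (G t)).trans <| by
        rw [projIcc_of_mem hab (hGab t (Ico_subset_Icc_self ht))]
        exact hGF t (Ico_subset_Icc_self ht))
      (hu₀ k).le
  have hu_mono : ∀ t ∈ Icc 0 T, Monotone fun k => u k t := fun t ht =>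
    monotone_nat_of_le_succ fun k => le_of_subsolution_of_supersolution (hK (k + 1)) (hu k)
      (hu (k + 1)) (fun s _ => hmono k (u k s)) (fun s _ => le_rfl) (by rw [hu₀, hu₀]) t ht
  have hbdd : ∀ t ∈ Icc 0 T, BddAbove (range fun k => u k t) := fun t ht =>
    ⟨G t, forall_mem_range.mpr fun k => huG k t ht⟩
  obtain ⟨w, hwu, hw⟩ := exists_hasDerivAt_of_tendsto_solutions hunif
    (fun k => (hK k).continuous) hFkL hT hu (w := fun t => ⨆ k, u k t)
    fun t ht => tendsto_atTop_ciSup (hu_mono t ht) (hbdd t ht)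
  refine ⟨w, ?_, hw, fun t ht => hwu ht ▸ ciSup_le fun k => huG k t ht⟩
  simp [hwu (left_mem_Icc.mpr hT), hu₀]

theorem exists_solution_le_of_supersolution {F : ℝ → ℝ} (hF : Continuous F) {G G' : ℝ → ℝ}
    {T : ℝ} (hT : 0 < T) (hG : ∀ t ∈ Icc 0 T, HasDerivWithinAt G (G' t) (Icc 0 T) t)
    (hGF : ∀ t ∈ Icc 0 T, F (G t) ≤ G' t) :
    ∃ T' ∈ Ioc 0 T, ∃ w : ℝ → ℝ, w 0 = G 0 ∧ (∀ t ∈ Icc 0 T', HasDerivAt w (F (w t)) t) ∧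
      ∀ t ∈ Icc 0 T', w t ≤ G t := by
  obtain ⟨R, hR⟩ := isCompact_Icc.exists_bound_of_continuousOn
    fun t ht => (hG t ht).continuousWithinAt
  have hGJ : ∀ t ∈ Icc 0 T, G t ∈ Icc (-R - 1) R := fun t ht => by
    have := abs_le.mp (hR t ht)
    constructor <;> linarith
  have hJ : -R - 1 ≤ R := (hGJ 0 ⟨le_rfl, hT.le⟩).1.trans (hGJ 0 ⟨le_rfl, hT.le⟩).2
  obtain ⟨M, hM⟩ :=
    isCompact_Icc.exists_bound_of_continuousOn (hF.continuousOn (s := Icc (-R - 1) R))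
  -- Short enough that a solution of speed at most `M` starting at `G 0` stays above `-R - 1`.
  set T' := min T (1 / (|M| + 1))
  have hT' : 0 < T' := lt_min hT (by positivity)
  have hMT' : |M| * T' ≤ 1 := by
    calc |M| * T' ≤ |M| * (1 / (|M| + 1)) := by gcongr; exact min_le_right _ _
      _ ≤ 1 := by rw [mul_one_div, div_le_one (by positivity)]; linarith
  have hsub : Icc 0 T' ⊆ Icc 0 T := Icc_subset_Icc_right (min_le_left _ _)
  obtain ⟨w, hw₀, hw, hwG⟩ := exists_solution_projIcc_le_of_supersolution hJ hF.continuousOn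
    hT'.le (fun t ht => (hG t (hsub ht)).mono hsub) (fun t ht => hGJ t (hsub ht))
    (fun t ht => hGF t (hsub ht))
  have hwJ : ∀ t ∈ Icc 0 T', w t ∈ Icc (-R - 1) R := by
    intro t ht
    have hspeed := norm_image_sub_le_of_norm_deriv_le_segment'
      (fun s hs => (hw s hs).hasDerivWithinAt)
      (fun s _ => (hM _ (projIcc _ _ hJ _).2).trans (le_abs_self M)) t ht
    rw [Real.norm_eq_abs, hw₀, sub_zero] at hspeed
    have hMt : |M| * t ≤ 1 := (mul_le_mul_of_nonneg_left ht.2 (abs_nonneg M)).trans hMT'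
    refine ⟨?_, (hwG t ht).trans (hGJ t (hsub ht)).2⟩
    linarith [(abs_le.mp hspeed).1, (abs_le.mp (hR 0 ⟨le_rfl, hT.le⟩)).1]
  refine ⟨T', ⟨hT', min_le_left _ _⟩, w, hw₀, fun t ht => ?_, hwG⟩
  simpa [projIcc_of_mem hJ (hwJ t ht)] using hw t ht

theorem minimal_barrier_function_invariance_general
    {n : ℕ} (D : Set (EuclideanSpace ℝ (Fin n))) (hD : IsOpen D)
    (f : EuclideanSpace ℝ (Fin n) → EuclideanSpace ℝ (Fin n))
    (h : EuclideanSpace ℝ (Fin n) → ℝ) (hh : ContDiffOn ℝ 1 h D)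
    (μ : ℝ → ℝ) (hμ : IsMinimalFunction μ)
    (hbar : ∀ x ∈ D, -μ (h x) ≤ fderiv ℝ h x (f x))
    (τ : ℝ) (x : ℝ → EuclideanSpace ℝ (Fin n))
    (hxD : ∀ t ∈ Set.Ico (0 : ℝ) τ, x t ∈ D)
    (hxsol : ∀ t ∈ Set.Ico (0 : ℝ) τ, HasDerivAt x (f (x t)) t)
    (hx0 : 0 ≤ h (x 0)) :
    ∀ t ∈ Set.Ico (0 : ℝ) τ, 0 ≤ h (x t) := by
  intro t₁ ht₁
  by_contra! hneg
  set g : ℝ → ℝ := fun t => h (x t)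
  have hg : ∀ t ∈ Ico 0 τ, HasDerivAt g (fderiv ℝ h (x t) (f (x t))) t := fun t ht =>
    ((hh.differentiableOn one_ne_zero).differentiableAt (hD.mem_nhds (hxD t ht))
      ).hasFDerivAt.comp_hasDerivAt t (hxsol t ht)
  obtain ⟨t₀, ht₀, hgt₀, hg_neg⟩ := exists_last_zero ht₁.1
    (fun t ht => (hg t (Icc_subset_Ico_right ht₁.2 ht)).continuousAt.continuousWithinAt) hx0 hneg
  have hshift : ∀ s ∈ Icc 0 (t₁ - t₀), t₀ + s ∈ Ico 0 τ := fun s hs =>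
    ⟨by linarith [ht₀.1, hs.1], by linarith [ht₁.2, hs.2]⟩
  obtain ⟨T', hT', w, hw0, hw, hwg⟩ := exists_solution_le_of_supersolution (F := fun y => -μ y)
    hμ.1.neg (G := fun s => g (t₀ + s)) (sub_pos.mpr ht₀.2)
    (fun s hs => ((hg _ (hshift s hs)).comp_const_add t₀ s).hasDerivWithinAt)
    (fun s hs => hbar _ (hxD _ (hshift s hs)))
  have hw_nonneg := hμ.2 T' hT'.1 w (by simpa [hgt₀] using hw0)
    (fun t ht => hw t (Ico_subset_Icc_self ht)) (T' / 2) ⟨by linarith [hT'.1], by linarith [hT'.1]⟩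
  linarith [hwg (T' / 2) ⟨by linarith [hT'.1], by linarith [hT'.1]⟩,
    hg_neg (t₀ + T' / 2) ⟨by linarith [hT'.1], by linarith [hT'.1, hT'.2]⟩]

/-- if `h` is a minimal barrier function, i.e. there is a minimal function `μ`
with `L_f h(x) ≥ −μ(h(x))` on `D`, then `S = {x ∈ D : h(x) ≥ 0}` is positively invariant. -/
theorem minimal_barrier_function_invariance
    {n : ℕ} (D : Set (EuclideanSpace ℝ (Fin n))) (hD : IsOpen D)
    (f : EuclideanSpace ℝ (Fin n) → EuclideanSpace ℝ (Fin n)) (hf : ContinuousOn f D)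
    (h : EuclideanSpace ℝ (Fin n) → ℝ) (hh : ContDiffOn ℝ 1 h D)
    (hSne : ∃ x ∈ D, 0 ≤ h x)
    (μ : ℝ → ℝ) (hμ : IsMinimalFunction μ)
    (hbar : ∀ x ∈ D, -μ (h x) ≤ fderiv ℝ h x (f x))
    (τ : ℝ) (x : ℝ → EuclideanSpace ℝ (Fin n))
    (hxD : ∀ t ∈ Set.Ico (0 : ℝ) τ, x t ∈ D)
    (hxsol : ∀ t ∈ Set.Ico (0 : ℝ) τ, HasDerivAt x (f (x t)) t)
    (hx0 : 0 ≤ h (x 0)) :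
    ∀ t ∈ Set.Ico (0 : ℝ) τ, 0 ≤ h (x t) :=
  minimal_barrier_function_invariance_general D hD f h hh μ hμ hbar τ x hxD hxsol hx0
end

section
/- Let μ : ℝ → ℝ be continuous with μ(0) < 0. Then μ is a minimal function, i.e. every differentiable w : [0,τ) → ℝ with w(0) = 0 and ẇ(t) = −μ(w(t)) for all t ∈ [0,τ) satisfies w(t) ≥ 0 for all t ∈ [0,τ). -/
/-- Theorem 2, Case 1: a continuous `μ` with `μ(0) < 0` is a minimal function. -/
theorem minimal_function_of_neg_at_zero
    (μ : ℝ → ℝ) (hμc : Continuous μ) (hμ0 : μ 0 < 0)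
    (τ : ℝ) (w : ℝ → ℝ) (hw0 : w 0 = 0)
    (hw : ∀ t ∈ Set.Ico (0 : ℝ) τ, HasDerivAt w (-μ (w t)) t) :
    ∀ t ∈ Set.Ico (0 : ℝ) τ, 0 ≤ w t := by
  intro t₀ ht₀
  by_contra hneg
  push_neg at hneg
  have hcont : ContinuousOn w (Set.Icc 0 t₀) := by
    intro x hx
    exact ((hw x ⟨hx.1, lt_of_le_of_lt hx.2 ht₀.2⟩).continuousAt).continuousWithinAt
  set S := Set.Icc (0:ℝ) t₀ ∩ w ⁻¹' {0} with hS
  have hSne : S.Nonempty := ⟨0, ⟨le_refl _, ht₀.1⟩, hw0⟩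
  have hSclosed : IsClosed S :=
    hcont.preimage_isClosed_of_isClosed isClosed_Icc isClosed_singleton
  have hScompact : IsCompact S :=
    isCompact_Icc.of_isClosed_subset hSclosed Set.inter_subset_left
  obtain ⟨hsmem, hs0⟩ := hScompact.sSup_mem hSne
  set s := sSup S
  have hws : w s = 0 := hs0
  have hst : s < t₀ := by
    rcases lt_or_eq_of_le hsmem.2 with h | h
    · exact h
    · exfalso; rw [h] at hws; linarith
  -- all t in (s, t₀] have w t < 0
  have hneg' : ∀ t ∈ Set.Ioc s t₀, w t < 0 := by
    intro t ht
    rcases lt_trichotomy (w t) 0 with h | h | h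
    · exact h
    · exfalso
      have : t ∈ S := ⟨⟨le_trans hsmem.1 ht.1.le, ht.2⟩, h⟩
      exact absurd (le_csSup hScompact.bddAbove this) (not_le.mpr ht.1)
    · exfalso
      have hsub : Set.Icc t t₀ ⊆ Set.Icc 0 t₀ :=
        Set.Icc_subset_Icc (le_trans hsmem.1 ht.1.le) le_rfl
      have hiv := intermediate_value_Icc' ht.2 (hcont.mono hsub)
      have h0 : (0:ℝ) ∈ Set.Icc (w t₀) (w t) := ⟨hneg.le, h.le⟩
      obtain ⟨c, hc, hwc⟩ := hiv h0
      have hcS : c ∈ S := ⟨hsub hc, hwc⟩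
      have : c ≤ s := le_csSup hScompact.bddAbove hcS
      linarith [hc.1, ht.1]
  -- derivative at s is positive
  have hd := hw s ⟨hsmem.1, lt_of_le_of_lt hsmem.2 ht₀.2⟩
  rw [hws] at hd
  have hdpos : 0 < -μ 0 := by linarith
  rw [hasDerivAt_iff_tendsto_slope] at hd
  have hd' : Filter.Tendsto (slope w s) (nhdsWithin s (Set.Ioi s)) (nhds (-μ 0)) :=
    hd.mono_left (nhdsWithin_mono s (fun x hx => ne_of_gt hx))
  have hev : ∀ᶠ t in nhdsWithin s (Set.Ioi s), 0 < slope w s t :=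
    hd'.eventually (eventually_gt_nhds hdpos)
  have hev2 : ∀ᶠ t in nhdsWithin s (Set.Ioi s), t ∈ Set.Ioo s t₀ :=
    Filter.eventually_of_mem (Ioo_mem_nhdsGT_of_mem ⟨le_refl s, hst⟩) (fun x hx => hx)
  obtain ⟨t, hslope, htmem⟩ := (hev.and hev2).exists
  have hts : 0 < t - s := sub_pos.mpr htmem.1
  have : 0 < w t - w s := by
    have := hslope
    rw [slope_def_field] at this
    have := (div_pos_iff.mp this)
    rcases this with ⟨h1, _⟩ | ⟨_, h2⟩
    · linarith
    · linarith
  have hwt := hneg' t ⟨htmem.1, htmem.2.le⟩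
  linarith [hws]
end

section
/- Let μ : ℝ → ℝ be continuous with μ(0) = 0, and suppose there exists ε > 0 such that μ(w) ≤ 0 for all w ∈ [−ε, 0). Then μ is a minimal function, i.e. every differentiable w : [0,τ) → ℝ with w(0) = 0 and ẇ(t) = −μ(w(t)) for all t ∈ [0,τ) satisfies w(t) ≥ 0 for all t ∈ [0,τ). -/
/-- Theorem 2, Case 2: a continuous `μ` with `μ(0) = 0` such that `μ(w) ≤ 0`
on `[−ε, 0)` for some `ε > 0` is a minimal function. -/
theorem minimal_function_of_nonpos_left_nbhd
    (μ : ℝ → ℝ) (hμc : Continuous μ) (hμ0 : μ 0 = 0)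
    (hneg : ∃ ε > (0 : ℝ), ∀ v ∈ Set.Ico (-ε) (0 : ℝ), μ v ≤ 0)
    (τ : ℝ) (w : ℝ → ℝ) (hw0 : w 0 = 0)
    (hw : ∀ t ∈ Set.Ico (0 : ℝ) τ, HasDerivAt w (-μ (w t)) t) :
    ∀ t ∈ Set.Ico (0 : ℝ) τ, 0 ≤ w t := by
  obtain ⟨ε, hε, hμneg⟩ := hneg
  rintro t₀ ⟨ht₀0, ht₀τ⟩
  by_contra h
  push_neg at h
  -- continuity of w on [0, t₀]
  have hcont : ContinuousOn w (Set.Icc 0 t₀) := fun t ht =>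
    ((hw t ⟨ht.1, lt_of_le_of_lt ht.2 ht₀τ⟩).continuousAt).continuousWithinAt
  set a : ℝ := max (w t₀) (-ε/2) with ha_def
  have ha_neg : a < 0 := max_lt h (by linarith)
  have ha_ge : -ε < a := lt_of_lt_of_le (by linarith) (le_max_right _ _)
  have ha_le : w t₀ ≤ a := le_max_left _ _
  -- last zero of w in [0, t₀]
  set A : Set ℝ := {t ∈ Set.Icc (0:ℝ) t₀ | w t = 0} with hA_def
  have hA_ne : A.Nonempty := ⟨0, ⟨le_refl _, ht₀0⟩, hw0⟩
  have hA_closed : IsClosed A := by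
    have : A = Set.Icc (0:ℝ) t₀ ∩ w ⁻¹' {0} := by
      ext t; simp [hA_def, Set.mem_inter_iff, Set.mem_preimage, Set.mem_singleton_iff, Set.mem_setOf_eq]
    rw [this]
    exact hcont.preimage_isClosed_of_isClosed isClosed_Icc isClosed_singleton
  have hA_cpt : IsCompact A := isCompact_Icc.of_isClosed_subset hA_closed (fun t ht => ht.1)
  set t₁ := sSup A with ht₁_def
  have ht₁A : t₁ ∈ A := hA_cpt.sSup_mem hA_ne
  have hwt₁ : w t₁ = 0 := ht₁A.2
  have ht₁mem : t₁ ∈ Set.Icc (0:ℝ) t₀ := ht₁A.1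
  have ht₁lt : t₁ < t₀ := lt_of_le_of_ne ht₁mem.2 (fun he => by rw [he] at hwt₁; linarith)
  -- w < 0 on (t₁, t₀]
  have hneg_after : ∀ t, t₁ < t → t ≤ t₀ → w t < 0 := by
    intro t ht₁t htt₀
    rcases lt_trichotomy (w t) 0 with hlt | heq | hgt
    · exact hlt
    · exact absurd (le_csSup hA_cpt.bddAbove ⟨⟨le_trans ht₁mem.1 ht₁t.le, htt₀⟩, heq⟩) (not_le.mpr ht₁t)
    · -- IVT on [t, t₀] gives a zero > t₁
      have hsub : Set.Icc t t₀ ⊆ Set.Icc 0 t₀ :=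
        Set.Icc_subset_Icc (le_trans ht₁mem.1 ht₁t.le) le_rfl
      have := intermediate_value_Icc' htt₀ (hcont.mono hsub)
      have h0 : (0:ℝ) ∈ Set.Icc (w t₀) (w t) := ⟨h.le, hgt.le⟩
      obtain ⟨s, hs, hws⟩ := this h0
      have : s ≤ t₁ := le_csSup hA_cpt.bddAbove ⟨⟨le_trans ht₁mem.1 (le_trans ht₁t.le hs.1), hs.2⟩, hws⟩
      linarith [hs.1]
  -- first time w hits a in [t₁, t₀]
  set B : Set ℝ := {t ∈ Set.Icc t₁ t₀ | w t = a} with hB_def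
  have hsub₁ : Set.Icc t₁ t₀ ⊆ Set.Icc 0 t₀ := Set.Icc_subset_Icc ht₁mem.1 le_rfl
  have hB_ne : B.Nonempty := by
    have := intermediate_value_Icc' ht₁lt.le (hcont.mono hsub₁)
    have haI : a ∈ Set.Icc (w t₀) (w t₁) := ⟨ha_le, by rw [hwt₁]; exact ha_neg.le⟩
    obtain ⟨s, hs, hws⟩ := this haI
    exact ⟨s, hs, hws⟩
  have hB_closed : IsClosed B := by
    have : B = Set.Icc t₁ t₀ ∩ w ⁻¹' {a} := by
      ext t; simp [hB_def, Set.mem_inter_iff, Set.mem_preimage, Set.mem_singleton_iff, Set.mem_setOf_eq]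
    rw [this]
    exact (hcont.mono hsub₁).preimage_isClosed_of_isClosed isClosed_Icc isClosed_singleton
  have hB_cpt : IsCompact B := isCompact_Icc.of_isClosed_subset hB_closed (fun t ht => ht.1)
  set t₂ := sInf B with ht₂_def
  have ht₂B : t₂ ∈ B := hB_cpt.sInf_mem hB_ne
  have hwt₂ : w t₂ = a := ht₂B.2
  have ht₂mem : t₂ ∈ Set.Icc t₁ t₀ := ht₂B.1
  have ht₁t₂ : t₁ < t₂ := lt_of_le_of_ne ht₂mem.1 (fun he => by rw [← he] at hwt₂; linarith [hwt₁ ▸ hwt₂])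
  -- w > a on [t₁, t₂)
  have hgt_before : ∀ t, t₁ ≤ t → t < t₂ → a < w t := by
    intro t ht₁t htt₂
    by_contra hle
    push_neg at hle
    have htt₀ : t ≤ t₀ := le_trans htt₂.le ht₂mem.2
    rcases eq_or_lt_of_le hle with heq | hlt
    · have : t₂ ≤ t := csInf_le hB_cpt.bddBelow ⟨⟨ht₁t, htt₀⟩, heq⟩
      linarith
    · -- IVT on [t₁, t]
      have hsub₂ : Set.Icc t₁ t ⊆ Set.Icc 0 t₀ :=
        Set.Icc_subset_Icc ht₁mem.1 htt₀
      have := intermediate_value_Icc' ht₁t (hcont.mono hsub₂)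
      have haI : a ∈ Set.Icc (w t) (w t₁) := ⟨hlt.le, by rw [hwt₁]; exact ha_neg.le⟩
      obtain ⟨s, hs, hws⟩ := this haI
      have : t₂ ≤ s := csInf_le hB_cpt.bddBelow ⟨⟨hs.1, le_trans hs.2 htt₀⟩, hws⟩
      linarith [hs.2]
  -- w is monotone on [t₁, t₂]
  have hmono : MonotoneOn w (Set.Icc t₁ t₂) := by
    have hsubI : Set.Icc t₁ t₂ ⊆ Set.Icc 0 t₀ := Set.Icc_subset_Icc ht₁mem.1 ht₂mem.2
    apply monotoneOn_of_deriv_nonneg (convex_Icc t₁ t₂) (hcont.mono hsubI)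
    · intro t ht
      rw [interior_Icc] at ht
      exact ((hw t ⟨le_trans ht₁mem.1 ht.1.le,
        lt_of_le_of_lt (le_trans ht.2.le ht₂mem.2) ht₀τ⟩).differentiableAt).differentiableWithinAt
    · intro t ht
      rw [interior_Icc] at ht
      have hd := hw t ⟨le_trans ht₁mem.1 ht.1.le,
        lt_of_le_of_lt (le_trans ht.2.le ht₂mem.2) ht₀τ⟩
      rw [hd.deriv]
      have hw_lt : w t < 0 := hneg_after t ht.1 (le_trans ht.2.le ht₂mem.2)
      have hw_gt : a < w t := hgt_before t ht.1.le ht.2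
      have : μ (w t) ≤ 0 := hμneg _ ⟨by linarith, hw_lt⟩
      linarith
  have := hmono ⟨le_rfl, ht₁t₂.le⟩ ⟨ht₁t₂.le, le_rfl⟩ ht₁t₂.le
  rw [hwt₁, hwt₂] at this
  linarith
end

section
/- Let μ : ℝ → ℝ be continuous with μ(0) = 0, and suppose that for every ε > 0 there exist w', w'' ∈ [−ε, 0] with μ(w') > 0 and μ(w'') < 0. Then μ is a minimal function, i.e. every differentiable w : [0,τ) → ℝ with w(0) = 0 and ẇ(t) = −μ(w(t)) for all t ∈ [0,τ) satisfies w(t) ≥ 0 for all t ∈ [0,τ). -/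
/-- Theorem 2, Case 3: a continuous `μ` with `μ(0) = 0` that changes sign in
every left-neighborhood `[−ε, 0]` of `0` is a minimal function. -/
theorem minimal_function_of_sign_changes
    (μ : ℝ → ℝ) (hμc : Continuous μ) (hμ0 : μ 0 = 0)
    (hsign : ∀ ε > (0 : ℝ), (∃ w' ∈ Set.Icc (-ε) (0 : ℝ), 0 < μ w') ∧
      (∃ w'' ∈ Set.Icc (-ε) (0 : ℝ), μ w'' < 0))
    (τ : ℝ) (w : ℝ → ℝ) (hw0 : w 0 = 0)
    (hw : ∀ t ∈ Set.Ico (0 : ℝ) τ, HasDerivAt w (-μ (w t)) t) :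
    ∀ t ∈ Set.Ico (0 : ℝ) τ, 0 ≤ w t := by
  intro t₀ ht₀
  by_contra hneg
  push_neg at hneg
  -- pick c ∈ (w t₀, 0) with μ c < 0
  obtain ⟨-, c, hcmem, hcneg⟩ := hsign (-(w t₀)/2) (by linarith)
  have hc0 : c < 0 := by
    rcases lt_or_eq_of_le hcmem.2 with h | h
    · exact h
    · rw [h, hμ0] at hcneg; linarith
  have hcw : w t₀ < c := by have := hcmem.1; linarith
  set S := {t | t ∈ Set.Icc (0:ℝ) t₀ ∧ w t ≤ c} with hS
  have ht₀S : t₀ ∈ S := ⟨⟨ht₀.1, le_refl _⟩, hcw.le⟩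
  have hSne : S.Nonempty := ⟨t₀, ht₀S⟩
  have hSbd : BddBelow S := ⟨0, fun x hx => hx.1.1⟩
  set s := sInf S with hsdef
  have hs0 : 0 ≤ s := le_csInf hSne fun x hx => hx.1.1
  have hst : s ≤ t₀ := csInf_le hSbd ht₀S
  have hsIco : s ∈ Set.Ico 0 τ := ⟨hs0, lt_of_le_of_lt hst ht₀.2⟩
  have hcont : ContinuousAt w s := (hw s hsIco).continuousAt
  have hws : w s ≤ c := by
    by_contra h
    push_neg at h
    obtain ⟨δ, hδ, hδ'⟩ := Metric.continuousAt_iff.mp hcont (w s - c) (by linarith)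
    obtain ⟨x, hxS, hx⟩ := exists_lt_of_csInf_lt hSne (lt_add_of_pos_right s hδ)
    have hxs : s ≤ x := csInf_le hSbd hxS
    have hd : dist x s < δ := by
      rw [Real.dist_eq, abs_of_nonneg (by linarith)]; linarith
    have := hδ' hd
    rw [Real.dist_eq] at this
    have hlt := (abs_lt.mp this).1
    have : c < w x := by linarith
    exact absurd hxS.2 (not_le.mpr this)
  have hspos : 0 < s := by
    rcases lt_or_eq_of_le hs0 with h | h
    · exact h
    · exfalso; rw [← h, hw0] at hws; linarith
  have hgt : ∀ t ∈ Set.Ioo (0:ℝ) s, c < w t := by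
    intro t ht
    by_contra h
    push_neg at h
    have htS : t ∈ S := ⟨⟨ht.1.le, le_trans ht.2.le hst⟩, h⟩
    exact absurd (csInf_le hSbd htS) (not_le.mpr ht.2)
  have hwsc : w s = c := by
    refine le_antisymm hws ?_
    have htend : Filter.Tendsto w (nhdsWithin s (Set.Iio s)) (nhds (w s)) :=
      (hcont.tendsto).mono_left nhdsWithin_le_nhds
    refine ge_of_tendsto htend ?_
    filter_upwards [Ioo_mem_nhdsLT_of_mem ⟨hspos, le_refl s⟩] with t ht
    exact (hgt t ht).le
  have hderiv := hw s hsIco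
  rw [hwsc] at hderiv
  have hslope := hasDerivAt_iff_tendsto_slope.mp hderiv
  have hslope' : Filter.Tendsto (slope w s) (nhdsWithin s (Set.Iio s)) (nhds (-μ c)) :=
    hslope.mono_left (nhdsWithin_mono s (fun x hx => ne_of_lt hx))
  have hle : -μ c ≤ 0 := by
    refine le_of_tendsto hslope' ?_
    filter_upwards [Ioo_mem_nhdsLT_of_mem ⟨hspos, le_refl s⟩] with t ht
    have h1 : c < w t := hgt t ht
    rw [slope_def_field, hwsc]
    exact div_nonpos_of_nonneg_of_nonpos (by linarith) (by linarith [ht.2])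
  linarith
end

section
/- Let μ : ℝ → ℝ be continuous with μ(0) = 0, and suppose there exists k > 0 such that for every ε with 0 < ε < k, μ(w) ≥ 0 for all w ∈ [−ε, 0] and the function w ↦ 1/μ(w) is not Lebesgue integrable on [−ε, 0]. Then μ is a minimal function, i.e. every differentiable w : [0,τ) → ℝ with w(0) = 0 and ẇ(t) = −μ(w(t)) for all t ∈ [0,τ) satisfies w(t) ≥ 0 for all t ∈ [0,τ). -/
/-!
Suppose `w t₁ < 0`. Let `a` be the last zero of `w` before `t₁` and `b > a` so close to `a`
that `w` stays in `[-k/2, 0]`, where `μ ≥ 0`, on `[a, b]`. There `w` is antitone, and injective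
on the open set where `μ ∘ w > 0`; substituting `v = w t` on that set gives
`∫ 1/μ(v) dv = ∫ 1 dt < ∞` over the corresponding values. At the remaining values in `[w b, 0]`
we have `μ v = 0`, so `1 / μ v = 0` in Lean, and `1/μ` is integrable on `[w b, 0]`,
contradicting the hypothesis for `ε = -w b`.
-/

open Set Filter Topology MeasureTheory

theorem ContinuousOn.exists_last_eq_of_le_of_lt {α δ : Type*}
    [ConditionallyCompleteLinearOrder α] [TopologicalSpace α] [OrderTopology α] [DenselyOrdered α]
    [LinearOrder δ] [TopologicalSpace δ] [OrderClosedTopology δ] {f : α → δ} {a b : α} {y : δ}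
    (hab : a ≤ b) (hf : ContinuousOn f (Icc a b)) (ha : y ≤ f a) (hb : f b < y) :
    ∃ c ∈ Ico a b, f c = y ∧ ∀ t ∈ Ioc c b, f t < y := by
  set Z := Icc a b ∩ f ⁻¹' {y}
  have hZ : IsClosed Z := hf.preimage_isClosed_of_isClosed isClosed_Icc isClosed_singleton
  have hZne : Z.Nonempty := intermediate_value_Icc' hab hf ⟨hb.le, ha⟩
  have hZbdd : BddAbove Z := ⟨b, fun t ht => ht.1.2⟩
  obtain ⟨⟨hac, hcb⟩, hfc⟩ := hZ.csSup_mem hZne hZbdd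
  refine ⟨sSup Z, ⟨hac, hcb.lt_of_ne fun hcb => hb.ne (hcb ▸ hfc)⟩, hfc,
    fun t ht => not_le.1 fun hft => ?_⟩
  obtain ⟨s, hs, hfs⟩ := intermediate_value_Icc' ht.2
    (hf.mono (Icc_subset_Icc (hac.trans ht.1.le) le_rfl)) ⟨hb.le, hft⟩
  exact (ht.1.trans_le hs.1).not_ge
    (le_csSup hZbdd ⟨⟨hac.trans (ht.1.le.trans hs.1), hs.2⟩, hfs⟩)

theorem AntitoneOn.injOn_of_hasDerivAt_ne_zero {w w' : ℝ → ℝ} {I s : Set ℝ}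
    (hw : AntitoneOn w I) (hI : I.OrdConnected) (hsI : s ⊆ I)
    (hderiv : ∀ t ∈ s, HasDerivAt w (w' t) t) (hne : ∀ t ∈ s, w' t ≠ 0) : InjOn w s := by
  intro a ha b hb hab
  by_contra hne_ab
  wlog hlt : a < b generalizing a b
  · exact this hb ha hab.symm (Ne.symm hne_ab) ((Ne.symm hne_ab).lt_of_le (not_lt.1 hlt))
  have hIcc : Icc a b ⊆ I := hI.out (hsI ha) (hsI hb)
  have hconst : EqOn w (fun _ => w a) (Icc a b) := fun t ht =>
    le_antisymm (hw (hsI ha) (hIcc ht) ht.1) (hab ▸ hw (hIcc ht) (hsI hb) ht.2)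
  have ha_mem : a ∈ Icc a b := left_mem_Icc.2 hlt.le
  exact hne a ha ((uniqueDiffOn_Icc hlt a ha_mem).eq_deriv _ (hderiv a ha).hasDerivWithinAt
    ((hasDerivWithinAt_const a _ (w a)).congr hconst (hconst ha_mem)))

theorem integrableOn_one_div_of_hasDerivAt_neg_comp {g w : ℝ → ℝ} {a b : ℝ} (hab : a ≤ b)
    (hg : Continuous g) (hw : ContinuousOn w (Icc a b))
    (hderiv : ∀ t ∈ Ioo a b, HasDerivAt w (-g (w t)) t) (hnn : ∀ t ∈ Ioo a b, 0 ≤ g (w t)) :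
    IntegrableOn (fun v => 1 / g v) (Icc (w b) (w a)) := by
  have hanti : AntitoneOn w (Icc a b) := by
    refine antitoneOn_of_hasDerivWithinAt_nonpos (f' := fun t => -g (w t)) (convex_Icc a b) hw
      (fun t ht => ?_) (fun t ht => ?_) <;> rw [interior_Icc] at ht
    · exact (hderiv t ht).hasDerivWithinAt
    · exact neg_nonpos.2 (hnn t ht)
  set s := Ioo a b ∩ (g ∘ w) ⁻¹' Ioi 0
  have hs : IsOpen s :=
    (hg.comp_continuousOn (hw.mono Ioo_subset_Icc_self)).isOpen_inter_preimage
      isOpen_Ioo isOpen_Ioi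
  have hinj : InjOn w s := hanti.injOn_of_hasDerivAt_ne_zero ordConnected_Icc
    (fun t ht => Ioo_subset_Icc_self ht.1) (fun t ht => hderiv t ht.1)
    (fun t ht => neg_ne_zero.2 (ne_of_gt ht.2))
  have himage : IntegrableOn (fun v => 1 / g v) (w '' s) := by
    rw [integrableOn_image_iff_integrableOn_abs_deriv_smul hs.measurableSet
      (fun t ht => (hderiv t ht.1).hasDerivWithinAt) hinj]
    have hvol : volume s ≠ ⊤ := ((measure_mono inter_subset_left).trans_lt measure_Ioo_lt_top).ne
    refine (integrableOn_const (C := (1 : ℝ)) hvol).congr_fun (fun t ht => ?_)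
      hs.measurableSet
    have hpos : 0 < g (w t) := ht.2
    rw [abs_neg, abs_of_pos hpos, smul_eq_mul, mul_one_div_cancel hpos.ne']
  rw [integrableOn_Icc_iff_integrableOn_Ioo]
  refine himage.of_forall_sdiff_eq_zero measurableSet_Ioo fun v ⟨hv, hvs⟩ => ?_
  obtain ⟨t, ht, rfl⟩ := intermediate_value_Ioo' hab hw hv
  have hzero : g (w t) = 0 := le_antisymm (not_lt.1 fun h => hvs ⟨t, ⟨ht, h⟩, rfl⟩) (hnn t ht)
  rw [hzero, div_zero]

theorem minimal_function_of_nonintegrable_general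
    (μ : ℝ → ℝ) (hμc : Continuous μ)
    (hk : ∃ k > (0 : ℝ), ∀ ε : ℝ, 0 < ε → ε < k →
      (∀ v ∈ Set.Icc (-ε) (0 : ℝ), 0 ≤ μ v) ∧
      ¬ MeasureTheory.IntegrableOn (fun v => 1 / μ v) (Set.Icc (-ε) (0 : ℝ))
        MeasureTheory.volume)
    (τ : ℝ) (w : ℝ → ℝ) (hw0 : w 0 = 0)
    (hw : ∀ t ∈ Set.Ico (0 : ℝ) τ, HasDerivAt w (-μ (w t)) t) :
    ∀ t ∈ Set.Ico (0 : ℝ) τ, 0 ≤ w t := by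
  obtain ⟨k, hk0, hk⟩ := hk
  intro t₁ ht₁
  by_contra! hwt₁
  have hwc : ContinuousOn w (Icc 0 t₁) := fun t ht =>
    (hw t ⟨ht.1, ht.2.trans_lt ht₁.2⟩).continuousAt.continuousWithinAt
  obtain ⟨a, ha, hwa, hneg⟩ := hwc.exists_last_eq_of_le_of_lt ht₁.1 hw0.ge hwt₁
  obtain ⟨b, hab, hbt₁, hsmall⟩ :
      ∃ b, a < b ∧ b ≤ t₁ ∧ ∀ t ∈ Icc a b, -(k / 2) < w t := by
    have hnear : ∀ᶠ t in 𝓝[≥] a, -(k / 2) < w t :=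
      ((hw a ⟨ha.1, ha.2.trans ht₁.2⟩).continuousAt.eventually
        (lt_mem_nhds (by linarith))).filter_mono nhdsWithin_le_nhds
    obtain ⟨u, hau, hsub⟩ := mem_nhdsGE_iff_exists_Icc_subset.1 hnear
    exact ⟨min u t₁, lt_min hau ha.2, min_le_right _ _,
      fun t ht => hsub ⟨ht.1, ht.2.trans (min_le_left _ _)⟩⟩
  have hwb : w b < 0 := hneg b ⟨hab, hbt₁⟩
  have hμnn := (hk (k / 2) (half_pos hk0) (half_lt_self hk0)).1
  refine (hk (-w b) (neg_pos.2 hwb) (by linarith [hsmall b ⟨hab.le, le_rfl⟩])).2 ?_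
  rw [neg_neg, ← hwa]
  exact integrableOn_one_div_of_hasDerivAt_neg_comp hab.le hμc
    (hwc.mono (Icc_subset_Icc ha.1 hbt₁))
    (fun t ht => hw t ⟨ha.1.trans ht.1.le, ht.2.le.trans_lt (hbt₁.trans_lt ht₁.2)⟩)
    (fun t ht => hμnn (w t) ⟨(hsmall t (Ioo_subset_Icc_self ht)).le,
      (hneg t ⟨ht.1, ht.2.le.trans hbt₁⟩).le⟩)

/-- Theorem 2, Case 4: a continuous `μ` with `μ(0) = 0` such that for some
`k > 0` and all `0 < ε < k`, `μ ≥ 0` on `[−ε, 0]` and `w ↦ 1/μ(w)` is not Lebesgue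
integrable on `[−ε, 0]`, is a minimal function. -/
theorem minimal_function_of_nonintegrable
    (μ : ℝ → ℝ) (hμc : Continuous μ) (hμ0 : μ 0 = 0)
    (hk : ∃ k > (0 : ℝ), ∀ ε : ℝ, 0 < ε → ε < k →
      (∀ v ∈ Set.Icc (-ε) (0 : ℝ), 0 ≤ μ v) ∧
      ¬ MeasureTheory.IntegrableOn (fun v => 1 / μ v) (Set.Icc (-ε) (0 : ℝ))
        MeasureTheory.volume)
    (τ : ℝ) (w : ℝ → ℝ) (hw0 : w 0 = 0)
    (hw : ∀ t ∈ Set.Ico (0 : ℝ) τ, HasDerivAt w (-μ (w t)) t) :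
    ∀ t ∈ Set.Ico (0 : ℝ) τ, 0 ≤ w t :=
  minimal_function_of_nonintegrable_general μ hμc hk τ w hw0 hw
end

section
/- Let μ : ℝ → ℝ be continuous, and suppose that either (i) μ(0) > 0, or (ii) μ(0) = 0 and there exist ε > 0 and a Lebesgue measure-zero set Z ⊆ [−ε, 0] such that μ(w) > 0 for all w ∈ [−ε, 0] \ Z and the function w ↦ 1/μ(w) is Lebesgue integrable on [−ε, 0]. Then μ is not a minimal function: there exist τ > 0, a differentiable w : [0,τ) → ℝ with w(0) = 0 and ẇ(t) = −μ(w(t)) for all t ∈ [0,τ), and a time t ∈ [0,τ) with w(t) < 0. -/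
/-!
Let `T x = ∫_x^0 dv / μ(v)`, the time a solution of `ẇ = -μ(w)` started at `0` needs to reach
`x < 0`. Either hypothesis yields an interval `[a, b]` with `a < 0 ≤ b` on which `1/μ` is
integrable and a.e. positive, so `T` is continuous and strictly decreasing there, and its inverse
`w` has `w(0) = 0` and `w(t) < 0` for `t > 0`. Where `μ` vanishes `T` is not differentiable, but
continuity of `μ` still gives `x - x₀ = -μ(x₀) (T x - T x₀) + o(T x - T x₀)`, which is all `w`
needs to have derivative `-μ(w)`. When `b = 0` the solution is kept at `0` for negative times,
which is consistent because then `μ(0) = 0`.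
-/

open Set MeasureTheory Filter Topology Asymptotics

theorem HasDerivWithinAt.of_leftInvOn_of_isLittleO {F g : ℝ → ℝ} {s t : Set ℝ} {y₀ m : ℝ}
    (hg : ContinuousWithinAt g t y₀) (hmaps : MapsTo g t s) (hFg : LeftInvOn F g t)
    (hy₀ : y₀ ∈ t)
    (hF : (fun x => x - g y₀ - m * (F x - F (g y₀))) =o[𝓝[s] g y₀] fun x => F x - F (g y₀)) :
    HasDerivWithinAt g m t y₀ := by
  rw [hasDerivWithinAt_iff_isLittleO]
  refine (hF.comp_tendsto (hg.tendsto_nhdsWithin hmaps)).congr' ?_ ?_ <;>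
    filter_upwards [self_mem_nhdsWithin] with y hy <;>
    simp only [Function.comp_apply, hFg hy, hFg hy₀, smul_eq_mul]
  ring

theorem HasDerivWithinAt.hasDerivAt_comp_max_const {g : ℝ → ℝ} {p q t m : ℝ}
    (hg : HasDerivWithinAt g m (Icc p q) t) (ht : t ∈ Ico p q) (hm : t = p → m = 0) :
    HasDerivAt (fun s => g (max s p)) m t := by
  have hright : HasDerivWithinAt (fun s => g (max s p)) m (Icc p q) t :=
    hg.congr (fun s hs => by rw [max_eq_left hs.1]) (by rw [max_eq_left ht.1])
  rcases ht.1.lt_or_eq with hpt | rfl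
  · exact hright.hasDerivAt (Icc_mem_nhds hpt ht.2)
  · have hleft : HasDerivWithinAt (fun s => g (max s p)) m (Iic p) p := by
      rw [hm rfl]
      exact (hasDerivWithinAt_const p _ (g p)).congr (fun s hs => by rw [max_eq_right hs])
        (by rw [max_self])
    refine (hleft.union hright).hasDerivAt ?_
    rw [Iic_union_Icc_eq_Iic ht.2.le]
    exact Iic_mem_nhds ht.2

noncomputable def travelTime (μ : ℝ → ℝ) (x : ℝ) : ℝ := ∫ v in x..0, (μ v)⁻¹

section
variable {μ : ℝ → ℝ} {a b : ℝ}

theorem isLittleO_sub_sub_mul_integral_inv {s : Set ℝ} [s.OrdConnected] {x₀ : ℝ}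
    (hμ : ContinuousWithinAt μ s x₀) (hpos : ∀ᵐ v, v ∈ s → 0 < μ v)
    (hint : IntegrableOn (fun v => (μ v)⁻¹) s) (hx₀ : x₀ ∈ s) :
    (fun x => x - x₀ - μ x₀ * ∫ v in x₀..x, (μ v)⁻¹) =o[𝓝[s] x₀]
      fun x => ∫ v in x₀..x, (μ v)⁻¹ := by
  refine isLittleO_iff.2 fun η hη => ?_
  obtain ⟨δ, hδ, hclose⟩ := Metric.continuousWithinAt_iff.1 hμ η hη
  filter_upwards [self_mem_nhdsWithin, nhdsWithin_le_nhds (Metric.ball_mem_nhds x₀ hδ)]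
    with x hxs hxδ
  have hsub : uIcc x₀ x ⊆ s := ‹s.OrdConnected›.uIcc_subset hx₀ hxs
  have hsubδ : uIcc x₀ x ⊆ Metric.ball x₀ δ := by
    rw [Real.ball_eq_Ioo] at hxδ ⊢
    exact ordConnected_Ioo.uIcc_subset (Real.ball_eq_Ioo x₀ δ ▸ Metric.mem_ball_self hδ) hxδ
  have hii : IntervalIntegrable (fun v => (μ v)⁻¹) volume x₀ x :=
    (hint.mono_set hsub).intervalIntegrable
  have hbound : ∀ᵐ v ∂volume.restrict (uIoc x₀ x), ‖1 - μ x₀ * (μ v)⁻¹‖ ≤ η * (μ v)⁻¹ := by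
    filter_upwards [ae_restrict_mem measurableSet_uIoc, ae_restrict_of_ae hpos] with v hv hμv
    have hv' : v ∈ uIcc x₀ x := uIoc_subset_uIcc hv
    have hμv := hμv (hsub hv')
    have hdist : |μ v - μ x₀| < η := hclose (hsub hv') (hsubδ hv')
    calc ‖1 - μ x₀ * (μ v)⁻¹‖ = |μ v - μ x₀| * (μ v)⁻¹ := by
          rw [Real.norm_eq_abs, show 1 - μ x₀ * (μ v)⁻¹ = (μ v - μ x₀) * (μ v)⁻¹ by field_simp,
            abs_mul, abs_of_pos (inv_pos.2 hμv)]
      _ ≤ η * (μ v)⁻¹ := by gcongr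
  calc ‖x - x₀ - μ x₀ * ∫ v in x₀..x, (μ v)⁻¹‖
      = ‖∫ v in x₀..x, (1 - μ x₀ * (μ v)⁻¹)‖ := by
        rw [intervalIntegral.integral_sub intervalIntegrable_const (hii.const_mul _),
          intervalIntegral.integral_const_mul, integral_one]
    _ ≤ |∫ v in x₀..x, η * (μ v)⁻¹| :=
        intervalIntegral.norm_integral_le_abs_of_norm_le hbound (hii.const_mul η)
    _ = η * ‖∫ v in x₀..x, (μ v)⁻¹‖ := by
        rw [intervalIntegral.integral_const_mul, abs_mul, abs_of_pos hη, Real.norm_eq_abs]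

theorem sub_le_mul_integral_inv {x y K : ℝ} (hxy : x ≤ y) (hK : 0 < K)
    (hμK : ∀ v ∈ Icc x y, μ v ≤ K) (hpos : ∀ᵐ v, v ∈ Icc x y → 0 < μ v)
    (hint : IntervalIntegrable (fun v => (μ v)⁻¹) volume x y) :
    y - x ≤ K * ∫ v in x..y, (μ v)⁻¹ := by
  have hmono : ∫ _ in x..y, K⁻¹ ≤ ∫ v in x..y, (μ v)⁻¹ := by
    refine intervalIntegral.integral_mono_ae_restrict hxy intervalIntegrable_const hint ?_
    filter_upwards [ae_restrict_mem measurableSet_Icc, ae_restrict_of_ae hpos] with v hv hμv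
    exact inv_anti₀ (hμv hv) (hμK v hv)
  rw [intervalIntegral.integral_const, smul_eq_mul] at hmono
  calc y - x = K * ((y - x) * K⁻¹) := by field_simp
    _ ≤ K * ∫ v in x..y, (μ v)⁻¹ := by gcongr

theorem travelTime_sub_travelTime (hint : IntegrableOn (fun v => (μ v)⁻¹) (Icc a b))
    (h0 : (0 : ℝ) ∈ Icc a b) {x y : ℝ} (hx : x ∈ Icc a b) (hy : y ∈ Icc a b) :
    travelTime μ x - travelTime μ y = ∫ v in x..y, (μ v)⁻¹ := by
  have hii : ∀ {p q}, p ∈ Icc a b → q ∈ Icc a b →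
      IntervalIntegrable (fun v => (μ v)⁻¹) volume p q := fun hp hq =>
    (hint.mono_set (ordConnected_Icc.uIcc_subset hp hq)).intervalIntegrable
  rw [travelTime, travelTime, ← intervalIntegral.integral_add_adjacent_intervals (hii hx hy)
    (hii hy h0), add_sub_cancel_right]

theorem continuousOn_travelTime (hint : IntegrableOn (fun v => (μ v)⁻¹) (Icc a b))
    (h0 : (0 : ℝ) ∈ Icc a b) : ContinuousOn (travelTime μ) (Icc a b) := by
  have hab : a ≤ b := h0.1.trans h0.2
  have hprim := intervalIntegral.continuousOn_primitive_interval'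
    (hint.mono_set (uIcc_of_le hab).subset).intervalIntegrable (a := 0) (by rwa [uIcc_of_le hab])
  rw [uIcc_of_le hab] at hprim
  exact hprim.neg.congr fun x _ => intervalIntegral.integral_symm _ _

theorem exists_sub_le_mul_travelTime_sub (hμ : ContinuousOn μ (Icc a b))
    (hpos : ∀ᵐ v, v ∈ Icc a b → 0 < μ v) (hint : IntegrableOn (fun v => (μ v)⁻¹) (Icc a b))
    (h0 : (0 : ℝ) ∈ Icc a b) :
    ∃ K > 0, ∀ x ∈ Icc a b, ∀ y ∈ Icc a b, x ≤ y →
      y - x ≤ K * (travelTime μ x - travelTime μ y) := by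
  obtain ⟨C, hC⟩ := isCompact_Icc.exists_bound_of_continuousOn hμ
  refine ⟨max C 1, by positivity, fun x hx y hy hxy => ?_⟩
  have hsub : Icc x y ⊆ Icc a b := Icc_subset_Icc hx.1 hy.2
  rw [travelTime_sub_travelTime hint h0 hx hy]
  refine sub_le_mul_integral_inv hxy (by positivity)
    (fun v hv => (le_abs_self _).trans ((hC v (hsub hv)).trans (le_max_left _ _)))
    (hpos.mono fun v hv hvxy => hv (hsub hvxy)) ?_
  exact (hint.mono_set (uIcc_of_le hxy ▸ hsub)).intervalIntegrable

theorem strictAntiOn_travelTime (hμ : ContinuousOn μ (Icc a b))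
    (hpos : ∀ᵐ v, v ∈ Icc a b → 0 < μ v) (hint : IntegrableOn (fun v => (μ v)⁻¹) (Icc a b))
    (h0 : (0 : ℝ) ∈ Icc a b) : StrictAntiOn (travelTime μ) (Icc a b) := by
  obtain ⟨K, hK, hKT⟩ := exists_sub_le_mul_travelTime_sub hμ hpos hint h0
  intro x hx y hy hxy
  exact sub_pos.1 (pos_of_mul_pos_right ((sub_pos.2 hxy).trans_le (hKT x hx y hy hxy.le)) hK.le)

theorem exists_hasDerivWithinAt_inverse_travelTime (hμ : ContinuousOn μ (Icc a b))
    (hpos : ∀ᵐ v, v ∈ Icc a b → 0 < μ v) (hint : IntegrableOn (fun v => (μ v)⁻¹) (Icc a b))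
    (h0 : (0 : ℝ) ∈ Icc a b) :
    ∃ g : ℝ → ℝ, MapsTo g (Icc (travelTime μ b) (travelTime μ a)) (Icc a b) ∧
      LeftInvOn (travelTime μ) g (Icc (travelTime μ b) (travelTime μ a)) ∧
      ∀ s ∈ Icc (travelTime μ b) (travelTime μ a),
        HasDerivWithinAt g (-μ (g s)) (Icc (travelTime μ b) (travelTime μ a)) s := by
  set T := travelTime μ
  set J := Icc (T b) (T a)
  obtain ⟨K, hK, hKT⟩ := exists_sub_le_mul_travelTime_sub hμ hpos hint h0
  have hsurj : SurjOn T (Icc a b) J :=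
    intermediate_value_Icc' (h0.1.trans h0.2) (continuousOn_travelTime hint h0)
  set g := Function.invFunOn T (Icc a b)
  have hmaps : MapsTo g J (Icc a b) := hsurj.mapsTo_invFunOn
  have hinv : LeftInvOn T g J := hsurj.rightInvOn_invFunOn
  have hdist : ∀ x ∈ Icc a b, ∀ y ∈ Icc a b, |x - y| ≤ K * |T x - T y| := by
    intro x hx y hy
    rcases le_total x y with hxy | hyx
    · rw [abs_sub_comm, abs_of_nonneg (sub_nonneg.2 hxy)]
      exact (hKT x hx y hy hxy).trans (by gcongr; exact le_abs_self _)
    · rw [abs_of_nonneg (sub_nonneg.2 hyx), abs_sub_comm]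
      exact (hKT y hy x hx hyx).trans (by gcongr; exact le_abs_self _)
  have hlip : LipschitzOnWith (Real.toNNReal K) g J :=
    LipschitzOnWith.of_dist_le' fun s hs s' hs' => by
      simpa only [Real.dist_eq, hinv hs, hinv hs'] using hdist _ (hmaps hs) _ (hmaps hs')
  refine ⟨g, hmaps, hinv, fun s hs =>
    HasDerivWithinAt.of_leftInvOn_of_isLittleO (hlip.continuousOn s hs) hmaps hinv hs ?_⟩
  -- `T x - T (g s) = -∫ v in g s..x, (μ v)⁻¹`
  refine (isLittleO_sub_sub_mul_integral_inv (hμ _ (hmaps hs)) hpos hint (hmaps hs)).neg_right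
    |>.congr' ?_ ?_ <;> filter_upwards [self_mem_nhdsWithin] with x hx <;>
    rw [← travelTime_sub_travelTime hint h0 (hmaps hs) hx] <;> ring

theorem exists_neg_solution_of_integrableOn_inv (hμ : ContinuousOn μ (Icc a b)) (ha : a < 0)
    (hb : 0 ≤ b) (hpos : ∀ᵐ v, v ∈ Icc a b → 0 < μ v)
    (hint : IntegrableOn (fun v => (μ v)⁻¹) (Icc a b)) (hb0 : 0 < b ∨ μ 0 = 0) :
    ∃ τ > (0 : ℝ), ∃ w : ℝ → ℝ, w 0 = 0 ∧
      (∀ t ∈ Ico (0 : ℝ) τ, HasDerivAt w (-μ (w t)) t) ∧ ∃ t ∈ Ico (0 : ℝ) τ, w t < 0 := by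
  have h0 : (0 : ℝ) ∈ Icc a b := ⟨ha.le, hb⟩
  have ha' : a ∈ Icc a b := ⟨le_rfl, ha.le.trans hb⟩
  have hb' : b ∈ Icc a b := ⟨ha.le.trans hb, le_rfl⟩
  have hanti := strictAntiOn_travelTime hμ hpos hint h0
  obtain ⟨g, hmaps, hinv, hderiv⟩ := exists_hasDerivWithinAt_inverse_travelTime hμ hpos hint h0
  set T := travelTime μ
  have hT0 : T 0 = 0 := intervalIntegral.integral_same
  have hTa : 0 < T a := hT0 ▸ hanti ha' h0 ha
  have hTb : T b ≤ 0 := hT0 ▸ hanti.antitoneOn h0 hb' hb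
  have hJ : ∀ {t}, t ∈ Ico 0 (T a) → t ∈ Icc (T b) (T a) := fun ht =>
    ⟨hTb.trans ht.1, ht.2.le⟩
  have hstart : (0 : ℝ) ∈ Ico 0 (T a) := ⟨le_rfl, hTa⟩
  have hhalf : T a / 2 ∈ Ico 0 (T a) := ⟨by positivity, by linarith⟩
  have hg0 : g 0 = 0 := hanti.injOn (hmaps (hJ hstart)) h0 (by rw [hinv (hJ hstart), hT0])
  set w : ℝ → ℝ := fun t => g (max t (T b))
  have hwg : ∀ {t}, t ∈ Ico 0 (T a) → w t = g t := fun ht => by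
    simp only [w, max_eq_left (hJ ht).1]
  refine ⟨T a, hTa, w, by rw [hwg hstart, hg0], fun t ht => ?_, T a / 2, hhalf, ?_⟩
  · rw [hwg ht]
    refine (hderiv t (hJ ht)).hasDerivAt_comp_max_const ⟨(hJ ht).1, ht.2⟩ fun htb => ?_
    have ht0 : t = 0 := le_antisymm (htb ▸ hTb) ht.1
    have hb_zero : b = 0 := hanti.injOn hb' h0 (by rw [← htb, ht0, hT0])
    rw [ht0, hg0, hb0.resolve_left hb_zero.not_gt, neg_zero]
  · rw [hwg hhalf, ← hanti.lt_iff_gt h0 (hmaps (hJ hhalf)), hinv (hJ hhalf), hT0]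
    positivity

end

/-- Theorem 2, necessity: if `μ(0) > 0`, or `μ(0) = 0` and `μ > 0` a.e. on some
`[−ε, 0]` with `1/μ` Lebesgue integrable there, then `μ` is not a minimal function: some
solution of `ẇ = −μ(w), w(0) = 0` becomes strictly negative. -/
theorem not_minimal_function_of_integrable
    (μ : ℝ → ℝ) (hμc : Continuous μ)
    (hyp : 0 < μ 0 ∨
      (μ 0 = 0 ∧ ∃ ε > (0 : ℝ), ∃ Z : Set ℝ, Z ⊆ Set.Icc (-ε) (0 : ℝ) ∧
        MeasureTheory.volume Z = 0 ∧
        (∀ v ∈ Set.Icc (-ε) (0 : ℝ) \ Z, 0 < μ v) ∧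
        MeasureTheory.IntegrableOn (fun v => 1 / μ v) (Set.Icc (-ε) (0 : ℝ))
          MeasureTheory.volume)) :
    ∃ τ > (0 : ℝ), ∃ w : ℝ → ℝ, w 0 = 0 ∧
      (∀ t ∈ Set.Ico (0 : ℝ) τ, HasDerivAt w (-μ (w t)) t) ∧
      ∃ t ∈ Set.Ico (0 : ℝ) τ, w t < 0 := by
  rcases hyp with hμ0 | ⟨hμ0, ε, hε, Z, -, hZ, hpos, hint⟩
  · obtain ⟨r, hr, hμr⟩ : ∃ r > 0, ∀ v ∈ Icc (-r) r, 0 < μ v := by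
      simpa only [Real.closedBall_eq_Icc, zero_sub, zero_add] using Metric.nhds_basis_closedBall
        |>.eventually_iff.1 (hμc.continuousAt.eventually (lt_mem_nhds hμ0))
    exact exists_neg_solution_of_integrableOn_inv hμc.continuousOn (neg_neg_of_pos hr) hr.le
      (ae_of_all _ hμr) (hμc.continuousOn.inv₀ fun v hv => (hμr v hv).ne').integrableOn_Icc
      (Or.inl hr)
  · refine exists_neg_solution_of_integrableOn_inv hμc.continuousOn (neg_neg_of_pos hε) le_rfl ?_
      (by simpa only [one_div] using hint) (Or.inr hμ0)
    filter_upwards [measure_eq_zero_iff_ae_notMem.1 hZ] with v hvZ hv using hpos v ⟨hv, hvZ⟩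
end

section
/- Every locally Lipschitz continuous function μ : ℝ → ℝ with μ(0) ≤ 0 is a minimal function, i.e. every differentiable w : [0,τ) → ℝ with w(0) = 0 and ẇ(t) = −μ(w(t)) for all t ∈ [0,τ) satisfies w(t) ≥ 0 for all t ∈ [0,τ). -/
/-! If `w` became negative at some time `b`, let `s` be the last zero of `w` before `b`, so that
`w ≤ 0` on `[s, b]`. On the compact set `w '' [0, b]` the function `μ` is `K`-Lipschitz, hence
`(-w)' = μ (w) ≤ μ 0 + K |w| ≤ K (-w)` on `[s, b]`, and Grönwall's inequality with `-w s = 0`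
forces `-w ≤ 0` there, contradicting `w b < 0`. -/

open Set

theorem nonpos_of_deriv_right_le_mul_self {f f' : ℝ → ℝ} {K a b : ℝ}
    (hf : ContinuousOn f (Icc a b)) (hf' : ∀ x ∈ Ico a b, HasDerivWithinAt f (f' x) (Ici x) x)
    (ha : f a ≤ 0) (bound : ∀ x ∈ Ico a b, f' x ≤ K * f x) :
    ∀ x ∈ Icc a b, f x ≤ 0 := by
  intro x hx
  calc f x ≤ gronwallBound 0 K 0 (x - a) :=
        le_gronwallBound_of_liminf_deriv_right_le hf
          (fun x hx _ hr => (hf' x hx).liminf_right_slope_le hr) ha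
          (by simpa using bound) x hx
    _ = 0 := gronwallBound_ε0_δ0 K _

theorem ContinuousOn.exists_eq_and_forall_Ioc_lt {α δ : Type*}
    [ConditionallyCompleteLinearOrder α] [TopologicalSpace α] [OrderTopology α]
    [DenselyOrdered α] [LinearOrder δ] [TopologicalSpace δ] [OrderClosedTopology δ]
    {f : α → δ} {a b : α} {c : δ} (hab : a ≤ b) (hf : ContinuousOn f (Icc a b))
    (ha : c ≤ f a) (hb : f b < c) :
    ∃ s ∈ Ico a b, f s = c ∧ ∀ x ∈ Ioc s b, f x < c := by
  set A := Icc a b ∩ f ⁻¹' Ici c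
  have hAbdd : BddAbove A := bddAbove_Icc.mono inter_subset_left
  have haA : a ∈ A := ⟨left_mem_Icc.2 hab, ha⟩
  have hsA : sSup A ∈ A :=
    (hf.preimage_isClosed_of_isClosed isClosed_Icc isClosed_Ici).csSup_mem ⟨a, haA⟩ hAbdd
  have hsb : sSup A < b := hsA.1.2.lt_of_ne fun h => hb.not_ge (h ▸ hsA.2)
  -- the last point where `f ≥ c` is a crossing of `c` by the intermediate value theorem
  obtain ⟨x, hx, hfx⟩ := intermediate_value_Icc' hsA.1.2
    (hf.mono (Icc_subset_Icc hsA.1.1 le_rfl)) ⟨hb.le, hsA.2⟩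
  have hxs : x = sSup A :=
    hx.1.antisymm' (le_csSup hAbdd ⟨⟨hsA.1.1.trans hx.1, hx.2⟩, hfx.ge⟩)
  refine ⟨sSup A, ⟨hsA.1.1, hsb⟩, hxs ▸ hfx, fun y hy => lt_of_not_ge fun hcy => ?_⟩
  exact hy.1.not_ge (le_csSup hAbdd ⟨⟨hsA.1.1.trans hy.1.le, hy.2⟩, hcy⟩)

/-- Corollary 1: every locally Lipschitz `μ : ℝ → ℝ` with `μ(0) ≤ 0` is a
minimal function. -/
theorem minimal_function_of_locallyLipschitz
    (μ : ℝ → ℝ) (hμ : LocallyLipschitz μ) (hμ0 : μ 0 ≤ 0)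
    (τ : ℝ) (w : ℝ → ℝ) (hw0 : w 0 = 0)
    (hw : ∀ t ∈ Set.Ico (0 : ℝ) τ, HasDerivAt w (-μ (w t)) t) :
    ∀ t ∈ Set.Ico (0 : ℝ) τ, 0 ≤ w t := by
  by_contra! ⟨b, ⟨hb0, hbτ⟩, hwb⟩
  have hsub : Icc 0 b ⊆ Ico 0 τ := Icc_subset_Ico_right hbτ
  have hcont : ContinuousOn w (Icc 0 b) := fun x hx =>
    (hw x (hsub hx)).continuousAt.continuousWithinAt
  obtain ⟨K, hK⟩ := hμ.locallyLipschitzOn.exists_lipschitzOnWith_of_compact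
    (isCompact_Icc.image_of_continuousOn hcont)
  obtain ⟨s, ⟨hs0, hsb⟩, hws, hneg⟩ := hcont.exists_eq_and_forall_Ioc_lt hb0 hw0.ge hwb
  have hsub' : Icc s b ⊆ Icc 0 b := Icc_subset_Icc_left hs0
  have hnonpos : ∀ x ∈ Icc s b, w x ≤ 0 := fun x hx =>
    hx.1.eq_or_lt.elim (fun h => h ▸ hws.le) fun h => (hneg x ⟨h, hx.2⟩).le
  have hbound : ∀ x ∈ Ico s b, μ (w x) ≤ K * -w x := by
    intro x hx
    have hx' : x ∈ Icc s b := ⟨hx.1, hx.2.le⟩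
    have hLip := hK.dist_le_mul (w x) ⟨x, hsub' hx', rfl⟩ (w 0) ⟨0, left_mem_Icc.2 hb0, rfl⟩
    rw [hw0, Real.dist_eq, Real.dist_eq, sub_zero, abs_of_nonpos (hnonpos x hx')] at hLip
    linarith [le_abs_self (μ (w x) - μ 0)]
  have hderiv : ∀ x ∈ Ico s b, HasDerivWithinAt (fun t => -w t) (μ (w x)) (Ici x) x :=
    fun x hx =>
      neg_neg (μ (w x)) ▸ (hw x (hsub (hsub' ⟨hx.1, hx.2.le⟩))).neg.hasDerivWithinAt
  have hwb' := nonpos_of_deriv_right_le_mul_self (hcont.mono hsub').neg hderiv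
    (by simp [hws]) hbound b ⟨hsb.le, le_rfl⟩
  exact hwb.not_ge (neg_nonpos.1 hwb')
end

section
/- Consider ẋ = f(x) on an open set D ⊆ ℝⁿ with f locally Lipschitz, and let h : D → ℝ be twice continuously differentiable. Assume: (i) Λ_δ := {x ∈ D : −δ ≤ h(x) ≤ δ} is compact for every δ ≥ 0; (ii) 0 is a regular value of h, i.e. ∇h(x) ≠ 0 for every x ∈ D with h(x) = 0; and (iii) S = {x ∈ D : h(x) ≥ 0} is positively invariant. Then there exists a locally Lipschitz function μ_L : ℝ → ℝ with μ_L(0) ≤ 0 such that L_f h(x) ≥ −μ_L(h(x)) for all x ∈ D. -/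
/-!
On the zero set of `h`, the Picard–Lindelöf solution through a point stays in `{h ≥ 0}`, so
`L_f h ≥ 0` there. The regular-value assumption and compactness of the bands give `c > 0` with
`c < ‖∇h‖` on a band `{|h| ≤ a}`; minimising `|h| + c · dist x ·` over that band (an Ekeland-type
argument) puts every `x` of a thinner band within `|h x| / c` of a zero of `h`. As `L_f h` is
Lipschitz on the compact band, this yields `-L_f h ≤ L |h|` near the zero set. Globally, the
supremum of `-L_f h - L |h|` over the bands `{|h| ≤ s}` is finite, nondecreasing in `s` and zero for
small `s`; averaging it over windows of fixed length makes it locally Lipschitz, and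
`μ_L r = L |r| + (that average at |r|)`.
-/

open Set Metric Filter Topology

theorem LipschitzOnWith.exists_eq_forall_mem_Ioo_hasDerivAt₀ {E : Type*} [NormedAddCommGroup E]
    [NormedSpace ℝ E] [CompleteSpace E] {v : E → E} {x₀ : E} {K : NNReal} {s : Set E}
    (hv : LipschitzOnWith K v s) (hs : s ∈ 𝓝 x₀) :
    ∃ α : ℝ → E, α 0 = x₀ ∧ ∃ ε > 0, ∀ t ∈ Ioo (-ε) ε, HasDerivAt α (v (α t)) t := by
  obtain ⟨a, ha, has⟩ := nhds_basis_closedBall.mem_iff.mp hs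
  lift a to NNReal using ha.le
  set L : NNReal := K * a + ‖v x₀‖₊ + 1
  have hL : ∀ x ∈ closedBall x₀ a, ‖v x‖ ≤ L := fun x hx => calc
    ‖v x‖ ≤ ‖v x - v x₀‖ + ‖v x₀‖ := norm_le_norm_sub_add _ _
    _ ≤ K * a + ‖v x₀‖ := by
      gcongr
      exact (hv.norm_sub_le (has hx) (has (mem_closedBall_self ha.le))).trans
        (by gcongr; exact mem_closedBall_iff_norm.mp hx)
    _ ≤ L := by simp [L]
  set ε : ℝ := a / L
  have hε : 0 < ε := div_pos ha (by positivity)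
  have hpl : IsPicardLindelof (fun _ => v) (tmin := -ε) (tmax := ε) ⟨0, by simp [hε.le]⟩ x₀
      a 0 L K :=
    .of_time_independent hL (hv.mono has)
      (by simp [ε, mul_div_cancel₀ _ (by positivity : (L : ℝ) ≠ 0)])
  obtain ⟨α, hα0, hα⟩ := hpl.exists_eq_forall_mem_Icc_hasDerivWithinAt₀
  exact ⟨α, hα0, ε, hε, fun t ht =>
    (hα t (Ioo_subset_Icc_self ht)).hasDerivAt (Icc_mem_nhds ht.1 ht.2)⟩

theorem HasDerivAt.nonneg_of_eventually_le {ψ : ℝ → ℝ} {d a : ℝ} (hψ : HasDerivAt ψ d a)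
    (hge : ∀ᶠ t in 𝓝[>] a, ψ a ≤ ψ t) : 0 ≤ d := by
  have hslope : Tendsto (slope ψ a) (𝓝[>] a) (𝓝 d) :=
    (hasDerivAt_iff_tendsto_slope.mp hψ).mono_left (nhdsWithin_mono _ fun t ht => ne_of_gt ht)
  refine ge_of_tendsto hslope ?_
  filter_upwards [hge, self_mem_nhdsWithin] with t hle (ht : a < t)
  rw [slope_def_field]
  exact div_nonneg (sub_nonneg.mpr hle) (sub_nonneg.mpr ht.le)

theorem fderiv_apply_nonneg_of_invariant {E : Type*} [NormedAddCommGroup E]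
    [NormedSpace ℝ E] [CompleteSpace E] {D : Set E} (hD : IsOpen D) {f : E → E} {h : E → ℝ}
    (hinv : ∀ (τ : ℝ) (x : ℝ → E),
      (∀ t ∈ Ico (0 : ℝ) τ, x t ∈ D) →
      (∀ t ∈ Ico (0 : ℝ) τ, HasDerivAt x (f (x t)) t) →
      0 ≤ h (x 0) →
      ∀ t ∈ Ico (0 : ℝ) τ, 0 ≤ h (x t))
    {z : E} (hz : z ∈ D) (hfz : ∃ K : NNReal, ∃ s ∈ 𝓝 z, LipschitzOnWith K f s)
    (hhz : DifferentiableAt ℝ h z) (hz0 : h z = 0) : 0 ≤ fderiv ℝ h z (f z) := by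
  obtain ⟨K, s, hs, hlip⟩ := hfz
  obtain ⟨α, hα0, ε, hε, hα⟩ := hlip.exists_eq_forall_mem_Ioo_hasDerivAt₀ hs
  have hα0' : HasDerivAt α (f z) 0 := hα0 ▸ hα 0 ⟨neg_neg_of_pos hε, hε⟩
  have hnear : ∀ᶠ t in 𝓝 (0 : ℝ), α t ∈ D ∧ HasDerivAt α (f (α t)) t :=
    (hα0'.continuousAt.eventually_mem (hα0 ▸ hD.mem_nhds hz)).and
      (eventually_of_mem (Ioo_mem_nhds (neg_neg_of_pos hε) hε) hα)
  obtain ⟨τ, hτ, hball⟩ := Metric.eventually_nhds_iff.mp hnear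
  have hIco : ∀ t ∈ Ico (0 : ℝ) τ, dist t 0 < τ := fun t ht => by
    rw [Real.dist_eq, sub_zero, abs_of_nonneg ht.1]
    exact ht.2
  have hpos := hinv τ α (fun t ht => (hball (hIco t ht)).1) (fun t ht => (hball (hIco t ht)).2)
    (by rw [hα0, hz0])
  have hψ : HasDerivAt (fun t => h (α t)) (fderiv ℝ h z (f z)) 0 :=
    hhz.hasFDerivAt.comp_hasDerivAt_of_eq 0 hα0' hα0.symm
  refine hψ.nonneg_of_eventually_le ?_
  filter_upwards [Ioo_mem_nhdsGT hτ] with t ht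
  rw [hα0, hz0]
  exact hpos t (Ioo_subset_Ico_self ht)

theorem IsLocalMin.norm_le_of_hasFDerivAt {E : Type*} [NormedAddCommGroup E]
    [NormedSpace ℝ E] {φ : E → ℝ} {φ' : E →L[ℝ] ℝ} {y : E} {c : ℝ}
    (hmin : IsLocalMin (fun z => φ z + c * ‖z - y‖) y) (hφ : HasFDerivAt φ φ' y) (hc : 0 ≤ c) :
    ‖φ'‖ ≤ c := by
  have hslope : ∀ v, -(c * ‖v‖) ≤ φ' v := by
    intro v
    have hline : HasDerivAt (fun t : ℝ => y + t • v) v 0 := by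
      simpa using ((hasDerivAt_id (0 : ℝ)).smul_const v).const_add y
    have hψ : HasDerivAt (fun t : ℝ => φ (y + t • v) + c * ‖v‖ * t) (φ' v + c * ‖v‖) 0 := by
      have hφv : HasDerivAt (fun t : ℝ => φ (y + t • v)) (φ' v) 0 :=
        hφ.comp_hasDerivAt_of_eq 0 hline (by simp)
      have := hφv.add ((hasDerivAt_id' (0 : ℝ)).const_mul (c * ‖v‖))
      rwa [mul_one] at this
    have hmin' := (by simpa using hline.continuousAt.tendsto :
      Tendsto (fun t : ℝ => y + t • v) (𝓝 0) (𝓝 y)).eventually hmin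
    have := hψ.nonneg_of_eventually_le <| by
      filter_upwards [nhdsWithin_le_nhds hmin', self_mem_nhdsWithin] with t ht (ht0 : 0 < t)
      simpa [norm_smul, abs_of_pos ht0, mul_comm, mul_left_comm] using ht
    linarith
  refine ContinuousLinearMap.opNorm_le_bound _ hc fun v => abs_le.mpr ⟨hslope v, ?_⟩
  simpa using hslope (-v)

theorem exists_eq_zero_mul_dist_le {E : Type*} [NormedAddCommGroup E] [NormedSpace ℝ E]
    {D : Set E} (hD : IsOpen D) {h : E → ℝ} (hh : DifferentiableOn ℝ h D) {a c : ℝ} (hc : 0 ≤ c)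
    (hK : IsCompact {x ∈ D | |h x| ≤ a})
    (hgrad : ∀ x ∈ D, |h x| ≤ a → c < ‖fderiv ℝ h x‖) {x : E} (hx : x ∈ D) (hxa : |h x| < a) :
    ∃ y ∈ D, h y = 0 ∧ c * dist x y ≤ |h x| := by
  have hF : ContinuousOn (fun z => |h z| + c * dist x z) {x ∈ D | |h x| ≤ a} :=
    ((hh.continuousOn.mono fun z hz => hz.1).abs).add (by fun_prop)
  obtain ⟨y, ⟨hyD, hya⟩, hmin⟩ := hK.exists_isMinOn ⟨x, hx, hxa.le⟩ hF
  have hFy : |h y| + c * dist x y ≤ |h x| := by simpa using hmin ⟨hx, hxa.le⟩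
  refine ⟨y, hyD, ?_, by linarith [abs_nonneg (h y)]⟩
  by_contra hy0
  have hdiff : HasFDerivAt h (fderiv ℝ h y) y := (hh.differentiableAt (hD.mem_nhds hyD)).hasFDerivAt
  have hlt : ∀ᶠ z in 𝓝 y, |h z| < a :=
    hdiff.continuousAt.abs.eventually_lt continuousAt_const
      (by linarith [mul_nonneg hc (dist_nonneg (x := x) (y := y))])
  -- `y` minimizes `|h| + c ‖· - y‖` near `y` as well, by the triangle inequality.
  have hloc : IsLocalMin (fun z => |h z| + c * ‖z - y‖) y := by
    filter_upwards [hD.mem_nhds hyD, hlt] with z hzD hza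
    have htri : dist x z ≤ dist x y + ‖z - y‖ := by
      rw [← dist_eq_norm, dist_comm z y]; exact dist_triangle x y z
    have : |h y| + c * dist x y ≤ |h z| + c * dist x z := hmin ⟨hzD, hza.le⟩
    simp only [sub_self, norm_zero, mul_zero, add_zero] at this ⊢
    linarith [mul_le_mul_of_nonneg_left htri hc]
  have hnorm := hloc.norm_le_of_hasFDerivAt (hdiff.abs hy0) hc
  have hsign : |(SignType.sign (h y) : ℝ)| = 1 := by
    rcases lt_or_gt_of_ne hy0 with hy | hy <;> simp [hy]
  rw [norm_smul, Real.norm_eq_abs, hsign, one_mul] at hnorm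
  exact (hgrad y hyD hya).not_ge hnorm

theorem exists_pos_forall_abs_le_mem {X : Type*} [TopologicalSpace X] {D : Set X} {h : X → ℝ}
    (hh : ContinuousOn h D) {δ₀ : ℝ} (hδ₀ : 0 < δ₀) (hK : IsCompact {x ∈ D | |h x| ≤ δ₀})
    {U : Set X} (hU : IsOpen U) (hZU : ∀ x ∈ D, h x = 0 → x ∈ U) :
    ∃ δ > 0, ∀ x ∈ D, |h x| ≤ δ → x ∈ U := by
  obtain ⟨m, hm, hmle⟩ := (hK.diff hU).exists_forall_le' ((hh.mono fun x hx => hx.1.1).abs)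
    (a := 0) fun x hx => abs_pos.mpr fun h0 => hx.2 (hZU x hx.1.1 h0)
  refine ⟨min δ₀ (m / 2), by positivity, fun x hx hxδ => ?_⟩
  by_contra hxU
  have := hmle x ⟨⟨hx, hxδ.trans (min_le_left _ _)⟩, hxU⟩
  linarith [hxδ.trans (min_le_right _ _)]

theorem exists_pos_lt_norm_fderiv_of_abs_le {E : Type*} [NormedAddCommGroup E] [NormedSpace ℝ E]
    {D : Set E} (hD : IsOpen D) {h : E → ℝ} (hh : ContDiffOn ℝ 1 h D)
    (hband : ∀ δ : ℝ, 0 ≤ δ → IsCompact {x ∈ D | |h x| ≤ δ})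
    (hreg : ∀ x ∈ D, h x = 0 → fderiv ℝ h x ≠ 0) :
    ∃ δ > 0, ∃ c > 0, ∀ x ∈ D, |h x| ≤ δ → c < ‖fderiv ℝ h x‖ := by
  have hfd : ContinuousOn (fderiv ℝ h) D := hh.continuousOn_fderiv_of_isOpen hD le_rfl
  obtain ⟨δ, hδ, hU⟩ := exists_pos_forall_abs_le_mem hh.continuousOn one_pos (hband 1 zero_le_one)
    (hfd.isOpen_inter_preimage hD isOpen_compl_singleton) fun x hx hx0 => ⟨hx, hreg x hx hx0⟩
  obtain ⟨m, hm, hmle⟩ := (hband δ hδ.le).exists_forall_le' (hfd.mono fun x hx => hx.1).norm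
    (a := 0) fun x hx => norm_pos_iff.mpr (hU x hx.1 hx.2).2
  exact ⟨δ, hδ, m / 2, half_pos hm, fun x hx hxδ => (half_lt_self hm).trans_le (hmle x ⟨hx, hxδ⟩)⟩

theorem LipschitzOnWith.clm_apply_of_norm_le {X 𝕜 E F : Type*} [PseudoMetricSpace X]
    [NontriviallyNormedField 𝕜] [NormedAddCommGroup E] [NormedSpace 𝕜 E] [NormedAddCommGroup F]
    [NormedSpace 𝕜 F] {A : X → E →L[𝕜] F} {u : X → E} {s : Set X} {KA Ku : NNReal} {CA Cu : ℝ}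
    (hA : LipschitzOnWith KA A s) (hu : LipschitzOnWith Ku u s) (hAb : ∀ x ∈ s, ‖A x‖ ≤ CA)
    (hub : ∀ x ∈ s, ‖u x‖ ≤ Cu) :
    LipschitzOnWith (CA * Ku + KA * Cu).toNNReal (fun x => A x (u x)) s := by
  refine LipschitzOnWith.of_dist_le' fun x hx y hy => ?_
  have hsplit : A x (u x) - A y (u y) = A x (u x - u y) + (A x - A y) (u y) := by simp
  calc dist (A x (u x)) (A y (u y))
      ≤ ‖A x‖ * ‖u x - u y‖ + ‖A x - A y‖ * ‖u y‖ := by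
        rw [dist_eq_norm, hsplit]
        exact norm_add_le_of_le ((A x).le_opNorm _) ((A x - A y).le_opNorm _)
    _ ≤ CA * (Ku * dist x y) + KA * dist x y * Cu := by
        rw [← dist_eq_norm, ← dist_eq_norm]
        gcongr
        · exact (norm_nonneg _).trans (hAb x hx)
        · exact hAb x hx
        · exact hu.dist_le_mul x hx y hy
        · exact hA.dist_le_mul x hx y hy
        · exact hub y hy
    _ = (CA * Ku + KA * Cu) * dist x y := by ring

theorem exists_lipschitzOnWith_fderiv_apply {E F : Type*} [NormedAddCommGroup E]
    [NormedSpace ℝ E] [NormedAddCommGroup F] [NormedSpace ℝ F] {D : Set E} (hD : IsOpen D)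
    {f : E → E} (hf : LocallyLipschitzOn D f) {h : E → F} (hh : ContDiffOn ℝ 2 h D) {C : Set E}
    (hC : IsCompact C) (hCD : C ⊆ D) :
    ∃ K, LipschitzOnWith K (fun x => fderiv ℝ h x (f x)) C := by
  have hh' : ContDiffOn ℝ 1 (fderiv ℝ h) D := hh.fderiv_of_isOpen hD (by norm_num)
  have hA : LocallyLipschitzOn D (fderiv ℝ h) := fun x hx =>
    let ⟨K, t, ht, hl⟩ := (hh'.contDiffAt (hD.mem_nhds hx)).exists_lipschitzOnWith
    ⟨K, t, mem_nhdsWithin_of_mem_nhds ht, hl⟩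
  obtain ⟨KA, hKA⟩ := (hA.mono hCD).exists_lipschitzOnWith_of_compact hC
  obtain ⟨Ku, hKu⟩ := (hf.mono hCD).exists_lipschitzOnWith_of_compact hC
  obtain ⟨CA, hCA⟩ := hC.exists_bound_of_continuousOn (hA.continuousOn.mono hCD)
  obtain ⟨Cu, hCu⟩ := hC.exists_bound_of_continuousOn (hf.continuousOn.mono hCD)
  exact ⟨_, hKA.clm_apply_of_norm_le hKu hCA hCu⟩

theorem neg_le_div_mul_abs_of_lipschitzOnWith {X : Type*} [PseudoMetricSpace X] {D : Set X}
    {h g : X → ℝ} {δ c : ℝ} {K : NNReal} (hc : 0 < c)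
    (hg : LipschitzOnWith K g {x ∈ D | |h x| ≤ δ}) (hgZ : ∀ y ∈ D, h y = 0 → 0 ≤ g y)
    (hdist : ∀ x ∈ D, |h x| ≤ δ → ∃ y ∈ D, h y = 0 ∧ c * dist x y ≤ |h x|) {x : X}
    (hx : x ∈ D) (hxδ : |h x| ≤ δ) : -g x ≤ K / c * |h x| := by
  obtain ⟨y, hyD, hy0, hxy⟩ := hdist x hx hxδ
  have hyδ : |h y| ≤ δ := by rw [hy0, abs_zero]; exact (abs_nonneg _).trans hxδ
  calc -g x ≤ g y - g x := by linarith [hgZ y hyD hy0]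
    _ ≤ K * dist x y := by linarith [dist_comm x y ▸ hg.le_add_mul ⟨hyD, hyδ⟩ ⟨hx, hxδ⟩]
    _ ≤ K / c * |h x| := by
      rw [div_mul_eq_mul_div, le_div_iff₀ hc, mul_assoc, mul_comm (dist x y)]
      exact mul_le_mul_of_nonneg_left hxy K.2

theorem exists_locallyLipschitz_ge_of_monotone {q : ℝ → ℝ} (hq : Monotone q) {δ : ℝ}
    (hδ : 0 < δ) (hqδ : q δ ≤ 0) :
    ∃ Q : ℝ → ℝ, LocallyLipschitz Q ∧ Q 0 ≤ 0 ∧ ∀ s, 0 ≤ s → q s ≤ Q s := by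
  set q' := fun s => max (q s) 0
  have hmono : Monotone q' := fun s t hst => max_le_max (hq hst) le_rfl
  have hnonneg : ∀ s, 0 ≤ q' s := fun s => le_max_right _ _
  have hint : ∀ a b, IntervalIntegrable q' MeasureTheory.volume a b :=
    fun _ _ => hmono.intervalIntegrable
  -- `δ⁻¹ ∫₀^{u+δ} q'` dominates the mean of `q'` over `[u, u + δ]`, and it vanishes at `0`
  -- because `q'` vanishes below `δ`.
  refine ⟨fun u => δ⁻¹ * ∫ s in 0..u + δ, q' s, fun u₀ => ?_, ?_, fun u hu => ?_⟩
  · refine ⟨(δ⁻¹ * q' (u₀ + 1 + δ)).toNNReal, Iio (u₀ + 1), Iio_mem_nhds (lt_add_one u₀),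
      LipschitzOnWith.of_dist_le' fun u hu v hv => ?_⟩
    rw [Real.dist_eq, Real.dist_eq, ← mul_sub,
      intervalIntegral.integral_interval_sub_left (hint _ _) (hint _ _), abs_mul,
      abs_of_pos (inv_pos.mpr hδ), mul_assoc]
    gcongr
    have hbound : ∀ s ∈ uIoc (v + δ) (u + δ), ‖q' s‖ ≤ q' (u₀ + 1 + δ) := fun s hs => by
      rw [Real.norm_of_nonneg (hnonneg s)]
      refine hmono (hs.2.trans (max_le ?_ ?_)) <;> linarith [mem_Iio.mp hu, mem_Iio.mp hv]
    simpa using intervalIntegral.norm_integral_le_of_norm_le_const hbound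
  · have hzero : EqOn q' 0 (uIcc 0 δ) := fun s hs =>
      max_eq_right ((hq (uIcc_of_le hδ.le ▸ hs).2).trans hqδ)
    simp [intervalIntegral.integral_congr hzero]
  · have hle : δ * q' u ≤ ∫ s in u..u + δ, q' s := by
      simpa using intervalIntegral.integral_mono_on (le_add_of_nonneg_right hδ.le)
        intervalIntegrable_const (hint _ _) fun s hs => hmono hs.1
    have hsplit := intervalIntegral.integral_add_adjacent_intervals (hint 0 u) (hint u (u + δ))
    have hhead : 0 ≤ ∫ s in 0..u, q' s := intervalIntegral.integral_nonneg hu fun s _ => hnonneg s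
    calc q u ≤ δ⁻¹ * (δ * q' u) := by field_simp; exact le_max_left _ _
      _ ≤ δ⁻¹ * ∫ s in 0..u + δ, q' s := by gcongr; linarith

theorem exists_locallyLipschitz_ge_of_continuousOn {X : Type*} [TopologicalSpace X] {D : Set X}
    {h p : X → ℝ} (hp : ContinuousOn p D)
    (hband : ∀ δ : ℝ, 0 ≤ δ → IsCompact {x ∈ D | |h x| ≤ δ}) {δ : ℝ} (hδ : 0 < δ)
    (hpδ : ∀ x ∈ D, |h x| ≤ δ → p x ≤ 0) :
    ∃ Q : ℝ → ℝ, LocallyLipschitz Q ∧ Q 0 ≤ 0 ∧ ∀ x ∈ D, p x ≤ Q (h x) := by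
  set Λ := fun s : ℝ => {x ∈ D | |h x| ≤ s}
  have hΛ : Monotone Λ := fun s t hst x hx => ⟨hx.1, hx.2.trans hst⟩
  have hbdd : ∀ s, BddAbove (insert 0 (p '' Λ s)) := fun s =>
    ((((hband _ (le_max_right s 0)).image_of_continuousOn (hp.mono fun x hx => hx.1)).bddAbove).mono
      (image_mono (hΛ (le_max_left s 0)))).insert 0
  set q := fun s => sSup (insert 0 (p '' Λ s))
  have hq : Monotone q := fun s t hst => csSup_le_csSup (hbdd t) (insert_nonempty _ _)
    (insert_subset_insert (image_mono (hΛ hst)))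
  have hqδ : q δ ≤ 0 := csSup_le (insert_nonempty _ _) <| by
    rintro _ (rfl | ⟨x, hx, rfl⟩)
    exacts [le_rfl, hpδ x hx.1 hx.2]
  obtain ⟨Q, hQ, hQ0, hqQ⟩ := exists_locallyLipschitz_ge_of_monotone hq hδ hqδ
  refine ⟨fun r => Q |r|, hQ.comp lipschitzWith_one_norm.locallyLipschitz, by simpa using hQ0,
    fun x hx => ?_⟩
  calc p x ≤ q |h x| := le_csSup (hbdd _) (mem_insert_of_mem _ ⟨x, ⟨hx, le_rfl⟩, rfl⟩)
    _ ≤ Q |h x| := hqQ _ (abs_nonneg _)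

/-- Theorem 3: for `f` locally Lipschitz on open `D`, `h` twice continuously
differentiable with all sublevel bands `Λ_δ = {x ∈ D : −δ ≤ h(x) ≤ δ}` compact, `0` a regular
value of `h`, and `S = {x ∈ D : h(x) ≥ 0}` positively invariant, there exists a locally
Lipschitz `μ_L` with `μ_L(0) ≤ 0` and `L_f h(x) ≥ −μ_L(h(x))` on `D`. -/
theorem exists_locallyLipschitz_comparison
    {n : ℕ} (D : Set (EuclideanSpace ℝ (Fin n))) (hD : IsOpen D)
    (f : EuclideanSpace ℝ (Fin n) → EuclideanSpace ℝ (Fin n))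
    (hf : ∀ x ∈ D, ∃ K : NNReal, ∃ s ∈ nhds x, LipschitzOnWith K f s)
    (h : EuclideanSpace ℝ (Fin n) → ℝ) (hh : ContDiffOn ℝ 2 h D)
    (hcompact : ∀ δ : ℝ, 0 ≤ δ → IsCompact {x ∈ D | -δ ≤ h x ∧ h x ≤ δ})
    (hreg : ∀ x ∈ D, h x = 0 → fderiv ℝ h x ≠ 0)
    (hinv : ∀ (τ : ℝ) (x : ℝ → EuclideanSpace ℝ (Fin n)),
      (∀ t ∈ Set.Ico (0 : ℝ) τ, x t ∈ D) →
      (∀ t ∈ Set.Ico (0 : ℝ) τ, HasDerivAt x (f (x t)) t) →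
      0 ≤ h (x 0) →
      ∀ t ∈ Set.Ico (0 : ℝ) τ, 0 ≤ h (x t)) :
    ∃ μL : ℝ → ℝ, LocallyLipschitz μL ∧ μL 0 ≤ 0 ∧
      ∀ x ∈ D, -μL (h x) ≤ fderiv ℝ h x (f x) := by
  have hband : ∀ δ : ℝ, 0 ≤ δ → IsCompact {x ∈ D | |h x| ≤ δ} := by
    simpa only [abs_le] using hcompact
  have hfL : LocallyLipschitzOn D f := fun x hx =>
    let ⟨K, s, hs, hl⟩ := hf x hx
    ⟨K, s, mem_nhdsWithin_of_mem_nhds hs, hl⟩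
  have hdiff : DifferentiableOn ℝ h D := hh.differentiableOn (by norm_num)
  obtain ⟨a, ha, c, hc, hgrad⟩ :=
    exists_pos_lt_norm_fderiv_of_abs_le hD (hh.of_le one_le_two) hband hreg
  obtain ⟨K, hK⟩ := exists_lipschitzOnWith_fderiv_apply hD hfL hh (hband (a / 2) (by positivity))
    fun x hx => hx.1
  have hnear : ∀ x ∈ D, |h x| ≤ a / 2 → -fderiv ℝ h x (f x) - K / c * |h x| ≤ 0 :=
    fun x hx hxa => sub_nonpos.mpr <| neg_le_div_mul_abs_of_lipschitzOnWith hc hK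
      (fun y hy hy0 => fderiv_apply_nonneg_of_invariant hD hinv hy (hf y hy)
        (hdiff.differentiableAt (hD.mem_nhds hy)) hy0)
      (fun x hx hxa => exists_eq_zero_mul_dist_le hD hdiff hc.le (hband a ha.le) hgrad hx
        (by linarith))
      hx hxa
  have hcont : ContinuousOn (fun x => -fderiv ℝ h x (f x) - K / c * |h x|) D :=
    ((hh.continuousOn_fderiv_of_isOpen hD (by norm_num)).clm_apply hfL.continuousOn).neg.sub
      (continuousOn_const.mul hh.continuousOn.abs)
  obtain ⟨Q, hQ, hQ0, hpQ⟩ :=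
    exists_locallyLipschitz_ge_of_continuousOn hcont hband (half_pos ha) hnear
  refine ⟨fun r => Q r + K / c * |r|,
    hQ.add ((lipschitzWith_smul (K / c)).comp lipschitzWith_one_norm).locallyLipschitz,
    by simpa using hQ0, fun x hx => by linarith [hpQ x hx]⟩
end

section
/- Consider the control affine system ẋ = f(x) + g(x)u on an open set D ⊆ ℝⁿ with f, g continuous, h : D → ℝ continuously differentiable, μ : ℝ → ℝ continuous, and input constraints U(x) = {u ∈ ℝ^m : A(x)u ≤ b(x) componentwise}, where A : D → ℝ^{q×m} and b : D → ℝ^q are continuous. Define K(x) = {u ∈ U(x) : L_f h(x) + L_g h(x)·u ≥ −μ(h(x))}. If for every x ∈ D the strict interior K_I(x) = {u ∈ ℝ^m : A(x)u < b(x) componentwise and L_f h(x) + L_g h(x)·u > −μ(h(x))} is nonempty, then there exists a continuous function k : D → ℝ^m with k(x) ∈ K(x) for all x ∈ D. -/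
/-!
Each `K(x)` is an intersection of half-spaces, hence convex. A control `u₀` satisfying the
constraints of `K(x)` strictly still satisfies them (non-strictly) at every `y` near `x`, by
continuity of the data in `x` for fixed `u₀`. So every point has a neighbourhood on which a
constant is a selection, and a partition of unity subordinate to these neighbourhoods glues the
constants into a continuous selection; convexity keeps the convex combinations inside `K(y)`.
-/

open Filter Set

section ConvexConstraints

variable {X E ι : Type*} [AddCommGroup E] [Module ℝ E] [TopologicalSpace E] [ContinuousAdd E]
  [ContinuousSMul ℝ E] [Finite ι] {φ : ι → X → E → ℝ}

theorem exists_continuous_forall_le_zero_of_forall_exists_lt_zero [TopologicalSpace X]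
    [NormalSpace X] [ParacompactSpace X]
    (hconv : ∀ i x, ConvexOn ℝ univ (φ i x)) (hcont : ∀ i u, Continuous fun x => φ i x u)
    (hslater : ∀ x, ∃ u, ∀ i, φ i x u < 0) :
    ∃ k : C(X, E), ∀ x i, φ i x (k x) ≤ 0 := by
  have hconvex : ∀ x, Convex ℝ {u | ∀ i, φ i x u ≤ 0} := fun x => by
    simpa only [ofPred_forall] using
      convex_iInter fun i => by simpa using (hconv i x).convex_le 0
  refine exists_continuous_forall_mem_convex_of_local_const hconvex fun x => ?_
  obtain ⟨u, hu⟩ := hslater x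
  refine ⟨u, ?_⟩
  filter_upwards [eventually_all.2 fun i =>
    (hcont i u).continuousAt.eventually_lt continuousAt_const (hu i)] with y hy i
  exact (hy i).le

theorem exists_continuousOn_forall_le_zero_of_forall_exists_lt_zero [PseudoEMetricSpace X]
    {D : Set X} (hconv : ∀ i x, ConvexOn ℝ univ (φ i x))
    (hcont : ∀ i u, ContinuousOn (fun x => φ i x u) D)
    (hslater : ∀ x ∈ D, ∃ u, ∀ i, φ i x u < 0) :
    ∃ k : X → E, ContinuousOn k D ∧ ∀ x ∈ D, ∀ i, φ i x (k x) ≤ 0 := by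
  classical
  obtain ⟨k, hk⟩ := exists_continuous_forall_le_zero_of_forall_exists_lt_zero
    (X := D) (fun i x => hconv i x) (fun i u => (hcont i u).domRestrict)
    (fun x => hslater x x.2)
  refine ⟨fun x => if hx : x ∈ D then k ⟨x, hx⟩ else 0, ?_, fun x hx => ?_⟩
  · rw [continuousOn_iff_continuous_domRestrict, domRestrict_dite]
    exact k.continuous
  · simpa only [dif_pos hx] using hk ⟨x, hx⟩

end ConvexConstraints

theorem convexOn_univ_sum_mul_sub {ι : Type*} [Fintype ι] (a : ι → ℝ) (c : ℝ) :
    ConvexOn ℝ univ fun u : EuclideanSpace ℝ ι => ∑ j, a j * u j - c :=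
  (((∑ j, a j • EuclideanSpace.proj j : EuclideanSpace ℝ ι →L[ℝ] ℝ).toLinearMap.convexOn
    convex_univ).sub (concaveOn_const c convex_univ)).congr fun u _ => by simp

/-- Proposition 3: if the strict interior `K_I(x)` of the viable control set
`K(x) = {u ∈ U(x) : L_f h(x) + L_g h(x)·u ≥ −μ(h(x))}`, with affine input constraints
`U(x) = {u : A(x)u ≤ b(x)}`, is nonempty for each `x ∈ D`, then there exists a continuous
selection `k` with `k(x) ∈ K(x)` for all `x ∈ D`. -/
theorem exists_continuous_selection
    {n m q : ℕ} (D : Set (EuclideanSpace ℝ (Fin n))) (hD : IsOpen D)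
    (f : EuclideanSpace ℝ (Fin n) → EuclideanSpace ℝ (Fin n)) (hf : ContinuousOn f D)
    (g : EuclideanSpace ℝ (Fin n) →
      (EuclideanSpace ℝ (Fin m) →L[ℝ] EuclideanSpace ℝ (Fin n))) (hg : ContinuousOn g D)
    (h : EuclideanSpace ℝ (Fin n) → ℝ) (hh : ContDiffOn ℝ 1 h D)
    (μ : ℝ → ℝ) (hμ : Continuous μ)
    (A : EuclideanSpace ℝ (Fin n) → Matrix (Fin q) (Fin m) ℝ) (hA : ContinuousOn A D)
    (b : EuclideanSpace ℝ (Fin n) → Fin q → ℝ) (hb : ContinuousOn b D)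
    (hKI : ∀ x ∈ D, ∃ u : EuclideanSpace ℝ (Fin m),
      (∀ i : Fin q, ∑ j : Fin m, A x i j * u j < b x i) ∧
      -μ (h x) < fderiv ℝ h x (f x) + fderiv ℝ h x (g x u)) :
    ∃ k : EuclideanSpace ℝ (Fin n) → EuclideanSpace ℝ (Fin m), ContinuousOn k D ∧
      ∀ x ∈ D, (∀ i : Fin q, ∑ j : Fin m, A x i j * (k x) j ≤ b x i) ∧
        -μ (h x) ≤ fderiv ℝ h x (f x) + fderiv ℝ h x (g x (k x)) := by
  -- `K(x) = {u | ∀ o, φ o x u ≤ 0}`: `none` indexes the barrier constraint, `some i` the `i`-th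
  -- input constraint.
  set φ : Option (Fin q) → EuclideanSpace ℝ (Fin n) → EuclideanSpace ℝ (Fin m) → ℝ :=
    fun o x u => o.elim (-μ (h x) - fderiv ℝ h x (f x) - fderiv ℝ h x (g x u))
      fun i => ∑ j, A x i j * u j - b x i with hφ
  have hconv : ∀ o x, ConvexOn ℝ univ (φ o x)
    | none, x => (convexOn_const _ convex_univ).sub
        ((fderiv ℝ h x ∘L g x).toLinearMap.concaveOn convex_univ)
    | some i, x => convexOn_univ_sum_mul_sub (A x i) (b x i)
  have hDh : ContinuousOn (fderiv ℝ h) D := hh.continuousOn_fderiv_of_isOpen hD le_rfl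
  have hcont : ∀ o u, ContinuousOn (fun x => φ o x u) D
    | none, u => (hμ.comp_continuousOn hh.continuousOn).neg.sub (hDh.clm_apply hf) |>.sub
        (hDh.clm_apply (hg.clm_apply continuousOn_const))
    | some i, u => (continuousOn_finsetSum _ fun j _ =>
        ((continuous_id.matrix_elem i j).comp_continuousOn hA).mul continuousOn_const).sub
          ((continuous_apply i).comp_continuousOn hb)
  have hslater : ∀ x ∈ D, ∃ u, ∀ o, φ o x u < 0 := by
    intro x hx
    obtain ⟨u, hrow, hbarrier⟩ := hKI x hx
    simp only [Option.forall, hφ, Option.elim, sub_neg]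
    exact ⟨u, by linarith, hrow⟩
  obtain ⟨k, hk_cont, hk⟩ :=
    exists_continuousOn_forall_le_zero_of_forall_exists_lt_zero hconv hcont hslater
  refine ⟨k, hk_cont, fun x hx => ?_⟩
  have hkx := hk x hx
  simp only [Option.forall, hφ, Option.elim, sub_nonpos] at hkx
  exact ⟨hkx.2, by linarith [hkx.1]⟩
end

section
/- Consider the control affine system ẋ = f(x) + g(x)u on an open set D ⊆ ℝⁿ with f, g continuous, h : D → ℝ continuously differentiable, μ : ℝ → ℝ continuous, input constraints U(x) = {u ∈ ℝ^m : A(x)u ≤ b(x) componentwise} with A : D → ℝ^{q×m} and b : D → ℝ^q continuous, and K(x) = {u ∈ U(x) : L_f h(x) + L_g h(x)·u ≥ −μ(h(x))}. Assume ⋃_{x∈D} U(x) is compact, k_nom : D → ℝ^m is continuous, and the strict interior K_I(x) = {u : A(x)u < b(x) componentwise and L_f h(x) + L_g h(x)·u > −μ(h(x))} is nonempty for every x ∈ D. Then for each x ∈ D the problem min_{u ∈ K(x)} ‖u − k_nom(x)‖² has a unique minimizer k̂(x), and the resulting function k̂ : D → ℝ^m is continuous. -/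
/-!
Each feasible set `K x` is convex and compact, so the distance to `k_nom x` has a minimizer on
it, unique because the Euclidean norm is strictly convex. Continuity is a form of Berge's maximum
theorem. The graph of `K` is closed and lies in a fixed compact set, so every cluster point of
`k̂` at `x₀` is feasible at `x₀`. The Slater point makes `K` lower hemicontinuous: a feasible
point pushed slightly towards a strictly feasible one stays feasible for all nearby `x`. So the
cluster point costs no more than `k̂ x₀`, and it is therefore `k̂ x₀`.
-/

open Filter Topology Set

section Hemicontinuity

variable {X Y : Type*} [TopologicalSpace X] [TopologicalSpace Y]

theorem MapClusterPt.prodMk_of_tendsto {α : Type*} {l : Filter α} {f : α → X} {g : α → Y}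
    {a : X} {b : Y} (hf : Tendsto f l (𝓝 a)) (hg : MapClusterPt b l g) :
    MapClusterPt (a, b) l fun x => (f x, g x) := by
  rw [((𝓝 a).basis_sets.prod_nhds (𝓝 b).basis_sets).mapClusterPt_iff_frequently]
  rintro ⟨s, t⟩ ⟨hs, ht⟩
  exact ((mapClusterPt_iff_frequently.1 hg t ht).and_eventually (hf hs)).mono
    fun x hx => ⟨hx.2, hx.1⟩

theorem continuous_of_isMinOn_of_lowerHemicontinuous {β : Type*} [LinearOrder β]
    [TopologicalSpace β] [OrderClosedTopology β] [DenselyOrdered β]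
    {K : X → Set Y} {C : Set Y} (hC : IsCompact C) (hKC : ∀ x, K x ⊆ C)
    (hgraph : IsClosed {p : X × Y | p.2 ∈ K p.1}) (hlower : LowerHemicontinuous K)
    {φ : X × Y → β} (hφ : Continuous φ) {k : X → Y}
    (hk : ∀ x, k x ∈ K x ∧ IsMinOn (fun u => φ (x, u)) (K x) (k x))
    (huniq : ∀ x, ∀ u ∈ K x, φ (x, u) ≤ φ (x, k x) → u = k x) : Continuous k := by
  refine continuous_iff_continuousAt.2 fun x₀ => ?_
  refine hC.tendsto_nhds_of_unique_mapClusterPt (.of_forall fun x => hKC x (hk x).1) ?_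
  intro w _ hw
  have hpair : MapClusterPt (x₀, w) (𝓝 x₀) fun x => (x, k x) := hw.prodMk_of_tendsto tendsto_id
  refine huniq x₀ w (hgraph.mem_of_mapClusterPt hpair (.of_forall fun x => (hk x).1)) ?_
  refine le_of_forall_gt_imp_ge_of_dense fun c hc => ?_
  obtain ⟨U, V, hU, hV, hxU, hkV, hUV⟩ :=
    isOpen_prod_iff.1 (isOpen_lt hφ continuous_const) x₀ (k x₀) hc
  have hev : ∀ᶠ x in 𝓝 x₀, φ (x, k x) ≤ c := by
    filter_upwards [lowerHemicontinuousAt_iff.1 (hlower x₀) V hV ⟨k x₀, (hk x₀).1, hkV⟩,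
      hU.mem_nhds hxU] with x ⟨v, hvK, hvV⟩ hxU
    exact ((hk x).2 hvK).trans (hUV ⟨hxU, hvV⟩).le
  exact (isClosed_le hφ continuous_const).mem_of_mapClusterPt hpair hev

end Hemicontinuity

theorem Convex.eq_of_isMinOn_norm_sub {E : Type*} [NormedAddCommGroup E] [NormedSpace ℝ E]
    [StrictConvexSpace ℝ E] {K : Set E} (hK : Convex ℝ K) {y v w : E} (hv : v ∈ K)
    (hw : w ∈ K) (hmin : IsMinOn (fun u => ‖u - y‖) K v) (hwv : ‖w - y‖ ≤ ‖v - y‖) :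
    w = v := by
  by_contra hne
  have hmid : (1 / 2 : ℝ) • v + (1 / 2 : ℝ) • w ∈ K :=
    hK hv hw (by norm_num) (by norm_num) (by norm_num)
  have hlt : ‖(1 / 2 : ℝ) • (v - y) + (1 / 2 : ℝ) • (w - y)‖ < ‖v - y‖ :=
    norm_combo_lt_of_ne le_rfl hwv (fun h => hne (sub_left_injective h).symm) (by norm_num)
      (by norm_num) (by norm_num)
  have hle : ‖v - y‖ ≤ ‖(1 / 2 : ℝ) • v + (1 / 2 : ℝ) • w - y‖ := hmin hmid
  rw [show (1 / 2 : ℝ) • v + (1 / 2 : ℝ) • w - y = (1 / 2 : ℝ) • (v - y) + (1 / 2 : ℝ) • (w - y)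
    by module] at hle
  exact hle.not_gt hlt

section ConvexConstraints

variable {X E ι : Type*}

def feasibleSet (c : ι → X × E → ℝ) (x : X) : Set E :=
  {u | ∀ i, c i (x, u) ≤ 0}

variable [TopologicalSpace X]

theorem lowerHemicontinuous_feasibleSet_of_slater [AddCommGroup E] [Module ℝ E]
    [TopologicalSpace E] [IsTopologicalAddGroup E] [ContinuousSMul ℝ E] [Finite ι]
    {c : ι → X × E → ℝ} (hc : ∀ i u, Continuous fun x => c i (x, u))
    (hconv : ∀ i x, ConvexOn ℝ univ fun u => c i (x, u))
    (hslater : ∀ x, ∃ s, ∀ i, c i (x, s) < 0) :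
    LowerHemicontinuous (feasibleSet c) := by
  refine fun x => lowerHemicontinuousAt_iff.2 fun V hV ⟨u, hu, huV⟩ => ?_
  obtain ⟨s, hs⟩ := hslater x
  have hseg : Tendsto (fun t : ℝ => (1 - t) • u + t • s) (𝓝[>] 0) (𝓝 u) := by
    simpa using ((by fun_prop : Continuous fun t : ℝ => (1 - t) • u + t • s).tendsto 0).mono_left
      nhdsWithin_le_nhds
  obtain ⟨t, ⟨hvV, ht1⟩, ht0⟩ := (((hseg.eventually_mem (hV.mem_nhds huV)).and
    ((eventually_lt_nhds one_pos).filter_mono nhdsWithin_le_nhds)).and self_mem_nhdsWithin).exists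
  -- by convexity, every point of the segment `(u, s]` is strictly feasible
  have hv : ∀ i, c i (x, (1 - t) • u + t • s) < 0 := fun i => by
    have := (hconv i x).2 (mem_univ u) (mem_univ s) (sub_nonneg.2 ht1.le) ht0.le
      (sub_add_cancel 1 t)
    simp only [smul_eq_mul] at this
    nlinarith [hu i, hs i]
  filter_upwards [eventually_all.2 fun i => ((hc i _).tendsto x).eventually_lt_const (hv i)]
    with x' hx'
  exact ⟨_, fun i => (hx' i).le, hvV⟩


theorem exists_continuous_isMinOn_norm_sub_of_slater [NormedAddCommGroup E] [NormedSpace ℝ E]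
    [StrictConvexSpace ℝ E] [Finite ι]
    {c : ι → X × E → ℝ} (hc : ∀ i, Continuous (c i))
    (hconv : ∀ i x, ConvexOn ℝ univ fun u => c i (x, u))
    (hslater : ∀ x, ∃ s, ∀ i, c i (x, s) < 0)
    {C : Set E} (hC : IsCompact C) (hKC : ∀ x, feasibleSet c x ⊆ C)
    {y : X → E} (hy : Continuous y) :
    ∃ k : X → E, Continuous k ∧ ∀ x, k x ∈ feasibleSet c x ∧
      IsMinOn (fun u => ‖u - y x‖) (feasibleSet c x) (k x) ∧
      ∀ u ∈ feasibleSet c x, ‖u - y x‖ ≤ ‖k x - y x‖ → u = k x := by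
  have hgraph : IsClosed {p : X × E | p.2 ∈ feasibleSet c p.1} := by
    have : {p : X × E | p.2 ∈ feasibleSet c p.1} = ⋂ i, {p | c i p ≤ 0} := by
      ext; simp [feasibleSet]
    exact this ▸ isClosed_iInter fun i => isClosed_le (hc i) continuous_const
  have hconvex : ∀ x, Convex ℝ (feasibleSet c x) := fun x => by
    simpa [feasibleSet, ofPred_forall] using convex_iInter fun i => (hconv i x).convex_le 0
  have hcompact : ∀ x, IsCompact (feasibleSet c x) := fun x =>
    hC.of_isClosed_subset (hgraph.preimage (.prodMk_right x)) (hKC x)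
  choose k hkK hkmin using fun x => (hcompact x).exists_isMinOn
    ((hslater x).imp fun s hs i => (hs i).le)
    (by fun_prop : Continuous fun u => ‖u - y x‖).continuousOn
  have huniq : ∀ x, ∀ u ∈ feasibleSet c x, ‖u - y x‖ ≤ ‖k x - y x‖ → u = k x :=
    fun x u hu => (hconvex x).eq_of_isMinOn_norm_sub (hkK x) hu (hkmin x)
  refine ⟨k, ?_, fun x => ⟨hkK x, hkmin x, huniq x⟩⟩
  exact continuous_of_isMinOn_of_lowerHemicontinuous hC hKC hgraph
    (lowerHemicontinuous_feasibleSet_of_slater (fun i u => (hc i).comp (.prodMk_left u)) hconv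
      hslater) (φ := fun p => ‖p.2 - y p.1‖) (by fun_prop) (fun x => ⟨hkK x, hkmin x⟩) huniq

end ConvexConstraints

section ControlBarrierQP

variable {X : Type*} {m q : ℕ}

/-- Index `some i` is the input constraint `(A x u)ᵢ ≤ b x i`; index `none` is the barrier
condition `β x ≤ lf x + lg x u`, where `β = -μ ∘ h`, `lf = L_f h` and `lg = L_g h`. -/
def qpConstraint (A : X → Matrix (Fin q) (Fin m) ℝ) (b : X → Fin q → ℝ) (β lf : X → ℝ)
    (lg : X → EuclideanSpace ℝ (Fin m) →L[ℝ] ℝ) :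
    Option (Fin q) → X × EuclideanSpace ℝ (Fin m) → ℝ
  | some i, p => ∑ j, A p.1 i j * p.2 j - b p.1 i
  | none, p => β p.1 - (lf p.1 + lg p.1 p.2)

variable {A : X → Matrix (Fin q) (Fin m) ℝ} {b : X → Fin q → ℝ} {β lf : X → ℝ}
  {lg : X → EuclideanSpace ℝ (Fin m) →L[ℝ] ℝ}

theorem continuous_qpConstraint [TopologicalSpace X] (hA : Continuous A) (hb : Continuous b)
    (hβ : Continuous β) (hlf : Continuous lf) (hlg : Continuous lg) :
    ∀ i, Continuous (qpConstraint A b β lf lg i)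
  | some i => by unfold qpConstraint; fun_prop
  | none => by unfold qpConstraint; fun_prop

theorem convexOn_qpConstraint (i : Option (Fin q)) (x : X) :
    ConvexOn ℝ univ fun u => qpConstraint A b β lf lg i (x, u) := by
  refine ⟨convex_univ, fun u _ v _ s t _ _ hst => le_of_eq ?_⟩
  cases i with
  | some i =>
    simp only [qpConstraint, PiLp.add_apply, PiLp.smul_apply, smul_eq_mul, mul_add,
      Finset.sum_add_distrib, mul_left_comm _ s, mul_left_comm _ t, ← Finset.mul_sum]
    linear_combination (b x i) * hst
  | none =>
    simp only [qpConstraint, map_add, map_smul, smul_eq_mul]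
    linear_combination (lf x - β x) * hst

theorem mem_feasibleSet_qpConstraint {x : X} {u : EuclideanSpace ℝ (Fin m)} :
    u ∈ feasibleSet (qpConstraint A b β lf lg) x ↔
      (∀ i, ∑ j, A x i j * u j ≤ b x i) ∧ β x ≤ lf x + lg x u := by
  simp [feasibleSet, Option.forall, qpConstraint, and_comm]

theorem qpConstraint_neg_iff {x : X} {u : EuclideanSpace ℝ (Fin m)} :
    (∀ i, qpConstraint A b β lf lg i (x, u) < 0) ↔
      (∀ i, ∑ j, A x i j * u j < b x i) ∧ β x < lf x + lg x u := by
  simp [Option.forall, qpConstraint, and_comm]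

end ControlBarrierQP

/-- Theorem 5: under compactness of `⋃_{x ∈ D} U(x)`, continuity of `k_nom`,
and nonemptiness of the strict interior `K_I(x)` of the viable control set
`K(x) = {u : A(x)u ≤ b(x), L_f h(x) + L_g h(x)·u ≥ −μ(h(x))}` for each `x ∈ D`, the QP
`min_{u ∈ K(x)} ‖u − k_nom(x)‖²` has a unique minimizer `k̂(x)` for each `x ∈ D`, and the
resulting controller `k̂` is continuous. -/
theorem qp_controller_unique_and_continuous
    {n m q : ℕ} (D : Set (EuclideanSpace ℝ (Fin n))) (hD : IsOpen D)
    (f : EuclideanSpace ℝ (Fin n) → EuclideanSpace ℝ (Fin n)) (hf : ContinuousOn f D)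
    (g : EuclideanSpace ℝ (Fin n) →
      (EuclideanSpace ℝ (Fin m) →L[ℝ] EuclideanSpace ℝ (Fin n))) (hg : ContinuousOn g D)
    (h : EuclideanSpace ℝ (Fin n) → ℝ) (hh : ContDiffOn ℝ 1 h D)
    (μ : ℝ → ℝ) (hμ : Continuous μ)
    (A : EuclideanSpace ℝ (Fin n) → Matrix (Fin q) (Fin m) ℝ) (hA : ContinuousOn A D)
    (b : EuclideanSpace ℝ (Fin n) → Fin q → ℝ) (hb : ContinuousOn b D)
    (K : EuclideanSpace ℝ (Fin n) → Set (EuclideanSpace ℝ (Fin m)))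
    (hK : ∀ x, K x = {u | (∀ i : Fin q, ∑ j : Fin m, A x i j * u j ≤ b x i) ∧
      -μ (h x) ≤ fderiv ℝ h x (f x) + fderiv ℝ h x (g x u)})
    (hUcompact : IsCompact (⋃ x ∈ D,
      {u : EuclideanSpace ℝ (Fin m) | ∀ i : Fin q, ∑ j : Fin m, A x i j * u j ≤ b x i}))
    (knom : EuclideanSpace ℝ (Fin n) → EuclideanSpace ℝ (Fin m))
    (hknom : ContinuousOn knom D)
    (hKI : ∀ x ∈ D, ∃ u : EuclideanSpace ℝ (Fin m),
      (∀ i : Fin q, ∑ j : Fin m, A x i j * u j < b x i) ∧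
      -μ (h x) < fderiv ℝ h x (f x) + fderiv ℝ h x (g x u)) :
    ∃ khat : EuclideanSpace ℝ (Fin n) → EuclideanSpace ℝ (Fin m),
      ContinuousOn khat D ∧
      ∀ x ∈ D, khat x ∈ K x ∧
        (∀ u ∈ K x, ‖khat x - knom x‖ ^ 2 ≤ ‖u - knom x‖ ^ 2) ∧
        (∀ u ∈ K x, ‖u - knom x‖ ^ 2 ≤ ‖khat x - knom x‖ ^ 2 → u = khat x) := by
  classical
  set c := qpConstraint (fun x : D => A x) (fun x : D => b x) (fun x : D => -μ (h x))
    (fun x : D => fderiv ℝ h x (f x)) (fun x : D => (fderiv ℝ h x).comp (g x))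
  have hKc (x : D) : K x = feasibleSet c x := by
    ext u; rw [mem_feasibleSet_qpConstraint, hK]; rfl
  have hfd : Continuous fun x : D => fderiv ℝ h x :=
    (hh.continuousOn_fderiv_of_isOpen hD le_rfl).domRestrict
  have hfD : Continuous fun x : D => f x := hf.domRestrict
  have hgD : Continuous fun x : D => g x := hg.domRestrict
  obtain ⟨k, hk, hkK⟩ := exists_continuous_isMinOn_norm_sub_of_slater (c := c)
    (continuous_qpConstraint hA.domRestrict hb.domRestrict
      (hμ.comp hh.continuousOn.domRestrict).neg (hfd.clm_apply hfD) (hfd.clm_comp hgD))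
    convexOn_qpConstraint
    (fun x => (hKI x x.2).imp fun u hu => qpConstraint_neg_iff.2 hu)
    hUcompact (fun x u hu => mem_biUnion x.2 (mem_feasibleSet_qpConstraint.1 hu).1)
    hknom.domRestrict
  set khat := fun x => if hx : x ∈ D then k ⟨x, hx⟩ else 0
  have hkhat : D.domRestrict khat = k := funext fun x => dif_pos x.2
  refine ⟨khat, continuousOn_iff_continuous_domRestrict.2 (hkhat ▸ hk), fun x hx => ?_⟩
  obtain ⟨hmem, hmin, huniq⟩ := hkK ⟨x, hx⟩
  rw [← congrFun hkhat ⟨x, hx⟩] at hmem hmin huniq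
  rw [hKc ⟨x, hx⟩]
  refine ⟨hmem, fun u hu => pow_le_pow_left₀ (norm_nonneg _) (hmin hu) 2, fun u hu hle => ?_⟩
  exact huniq u hu ((pow_le_pow_iff_left₀ (norm_nonneg _) (norm_nonneg _) two_ne_zero).1 hle)
end

section
/- Consider the time-varying system ẋ = f(t,x) on [0,∞) × D with D ⊆ ℝⁿ open and f : [0,∞) × D → ℝⁿ continuous, and let h : [0,∞) × D → ℝ be continuously differentiable with S_t = {x ∈ D : h(t,x) ≥ 0} nonempty for all t ≥ 0. Suppose there exists a continuous μ : [0,∞) × ℝ → ℝ such that (i) for every t₀ ≥ 0 and every differentiable w : [t₀,τ) → ℝ with w(t₀) = 0 and ẇ(t) = −μ(t, w(t)) for all t ∈ [t₀,τ), one has w(t) ≥ 0 for all t ∈ [t₀,τ); and (ii) ∂h/∂t(t,x) + ∇_x h(t,x)·f(t,x) ≥ −μ(t, h(t,x)) for all (t,x) ∈ [0,∞) × D. Then for every t₀ ≥ 0, every differentiable solution x : [t₀,τ) → D of ẋ(t) = f(t, x(t)) with x(t₀) ∈ S_{t₀} satisfies x(t) ∈ S_t for all t ∈ [t₀,τ).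 -/
open Set Filter Topology
open scoped NNReal

/-!
Along a solution, `v t = h (t, x t)` satisfies `v' ≥ -μ (t, v)` by the chain rule and the barrier
condition, so it suffices to show that a scalar supersolution with `v t₀ ≥ 0` stays nonnegative.
If `v t₁ < 0`, solve `w' = -μ (t, w)` backwards from `(t₁, v t₁)` by a solution lying above `v`.
Then `w t₀ ≥ 0 > w t₁`, and `w` restarted at its last zero before `t₁` contradicts minimality.

As `μ` is merely continuous, that solution comes from Peano-type approximation: the
sup-convolutions of `μ` in the state variable are Lipschitz, so Picard–Lindelöf solves their
equations; by comparison these solutions decrease and stay above `v`, and dominated convergence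
in the integral equation shows that their limit solves the original equation.
-/

theorem exists_forall_mem_Icc_hasDerivWithinAt_of_lipschitzWith {E : Type*}
    [NormedAddCommGroup E] [NormedSpace ℝ E] [CompleteSpace E] {F : ℝ → E → E} {a b : ℝ}
    {K L : ℝ≥0} (hab : a ≤ b) (hlip : ∀ t, LipschitzWith K (F t))
    (hcont : ∀ x, Continuous (F · x)) (hbound : ∀ t x, ‖F t x‖ ≤ L) (x₀ : E) :
    ∃ y : ℝ → E, y a = x₀ ∧ ∀ t ∈ Icc a b, HasDerivWithinAt y (F t (y t)) (Icc a b) t := by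
  have hpl : IsPicardLindelof F (tmin := a) (tmax := b) ⟨a, left_mem_Icc.2 hab⟩ x₀
      (L * (b - a)).toNNReal 0 L K :=
    { lipschitzOnWith := fun t _ => (hlip t).lipschitzOnWith
      continuousOn := fun x _ => (hcont x).continuousOn
      norm_le := fun t _ x _ => hbound t x
      mul_max_le := by
        simp only [NNReal.coe_zero, sub_zero, sub_self, max_eq_left (sub_nonneg.2 hab)]
        exact Real.le_coe_toNNReal _ }
  exact hpl.exists_eq_forall_mem_Icc_hasDerivWithinAt₀

theorem le_of_forall_mem_Icc_hasDerivWithinAt_of_lt {u z du dz : ℝ → ℝ} {a b : ℝ}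
    (hu : ∀ t ∈ Icc a b, HasDerivWithinAt u (du t) (Icc a b) t)
    (hz : ∀ t ∈ Icc a b, HasDerivWithinAt z (dz t) (Icc a b) t) (ha : u a ≤ z a)
    (hlt : ∀ t ∈ Ico a b, u t = z t → du t < dz t) : ∀ t ∈ Icc a b, u t ≤ z t := by
  have hright : ∀ {f df : ℝ → ℝ}, (∀ t ∈ Icc a b, HasDerivWithinAt f (df t) (Icc a b) t) →
      ∀ t ∈ Ico a b, HasDerivWithinAt f (df t) (Ici t) t := fun hf t ht =>
    (hf t (Ico_subset_Icc_self ht)).mono_of_mem_nhdsWithin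
      (mem_of_superset (Icc_mem_nhdsGE ht.2) (Icc_subset_Icc_left ht.1))
  exact image_le_of_deriv_right_lt_deriv_boundary'
    (fun t ht => (hu t ht).continuousWithinAt) (hright hu) ha
    (fun t ht => (hz t ht).continuousWithinAt) (hright hz) hlt

theorem LipschitzOnWith.of_tendsto {α β ι : Type*} [PseudoMetricSpace α] [PseudoMetricSpace β]
    {l : Filter ι} [l.NeBot] {f : ι → α → β} {F : α → β} {s : Set α} {K : ℝ≥0}
    (hf : ∀ i, LipschitzOnWith K (f i) s)
    (hF : ∀ x ∈ s, Tendsto (fun i => f i x) l (𝓝 (F x))) : LipschitzOnWith K F s :=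
  LipschitzOnWith.of_dist_le_mul fun x hx y hy =>
    le_of_tendsto' ((hF x hx).dist (hF y hy)) fun i => (hf i).dist_le_mul x hx y hy

theorem hasDerivWithinAt_of_eq_add_integral {Y φ : ℝ → ℝ} {a b : ℝ}
    (hφ : ContinuousOn φ (Icc a b)) (hY : ∀ t ∈ Icc a b, Y t = Y a + ∫ s in a..t, φ s)
    {t : ℝ} (ht : t ∈ Icc a b) : HasDerivWithinAt Y (φ t) (Icc a b) t := by
  have : Fact (t ∈ Icc a b) := ⟨ht⟩
  have hint : HasDerivWithinAt (fun t => ∫ s in a..t, φ s) (φ t) (Icc a b) t :=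
    intervalIntegral.integral_hasDerivWithinAt_right
      ((hφ.mono (Icc_subset_Icc_right ht.2)).intervalIntegrable_of_Icc ht.1)
      (hφ.stronglyMeasurableAtFilter_nhdsWithin measurableSet_Icc t) (hφ t ht)
  exact (hint.const_add (Y a)).congr_of_mem (fun s hs => hY s hs) ht

theorem HasDerivWithinAt.comp_reflect_Icc {f : ℝ → ℝ} {f' a b t : ℝ}
    (hf : HasDerivWithinAt f f' (Icc a b) (a + b - t)) :
    HasDerivWithinAt (fun s => f (a + b - s)) (-f') (Icc a b) t := by
  have hmaps : MapsTo (fun s => a + b - s) (Icc a b) (Icc a b) := fun s hs =>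
    ⟨by linarith [hs.2], by linarith [hs.1]⟩
  have := hf.comp t ((hasDerivAt_id t).const_sub (a + b)).hasDerivWithinAt hmaps
  rwa [mul_neg_one] at this

theorem exists_uniformContinuous_bounded_eqOn {μ : ℝ × ℝ → ℝ} {a b c d : ℝ} (hab : a ≤ b)
    (hcd : c ≤ d) (hμ : ContinuousOn μ (Icc a b ×ˢ Icc c d)) :
    ∃ g : ℝ × ℝ → ℝ, UniformContinuous g ∧ (∃ B, ∀ p, |g p| ≤ B) ∧
      EqOn g μ (Icc a b ×ˢ Icc c d) := by
  set Q : ℝ × ℝ → ℝ × ℝ := fun p => ((projIcc a b hab p.1 : ℝ), (projIcc c d hcd p.2 : ℝ))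
  have hQ : MapsTo Q univ (Icc a b ×ˢ Icc c d) := fun p _ =>
    ⟨(projIcc a b hab p.1).2, (projIcc c d hcd p.2).2⟩
  have hQuc : UniformContinuous Q :=
    ((uniformContinuous_subtype_val.comp (LipschitzWith.projIcc hab).uniformContinuous).comp
      uniformContinuous_fst).prodMk
    ((uniformContinuous_subtype_val.comp (LipschitzWith.projIcc hcd).uniformContinuous).comp
      uniformContinuous_snd)
  have hK : IsCompact (Icc a b ×ˢ Icc c d) := isCompact_Icc.prod isCompact_Icc
  obtain ⟨B, hB⟩ := hK.exists_bound_of_continuousOn hμ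
  refine ⟨μ ∘ Q, ?_, ⟨B, fun p => hB _ (hQ (mem_univ p))⟩, fun p hp => ?_⟩
  · exact uniformContinuousOn_univ.mp
      ((hK.uniformContinuousOn_of_continuous hμ).comp hQuc.uniformContinuousOn hQ)
  · simp [Q, projIcc_of_mem hab hp.1, projIcc_of_mem hcd hp.2]

theorem exists_eq_zero_forall_lt_zero_of_continuousOn {w : ℝ → ℝ} {a b : ℝ}
    (hab : a ≤ b) (hw : ContinuousOn w (Icc a b)) (ha : 0 ≤ w a) (hb : w b < 0) :
    ∃ c ∈ Ico a b, w c = 0 ∧ ∀ t ∈ Ioc c b, w t < 0 := by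
  set A := Icc a b ∩ w ⁻¹' Ici 0
  have hA : IsClosed A := hw.preimage_isClosed_of_isClosed isClosed_Icc isClosed_Ici
  have hAbdd : BddAbove A := ⟨b, fun t ht => ht.1.2⟩
  have hcA : sSup A ∈ A := hA.csSup_mem ⟨a, left_mem_Icc.2 hab, ha⟩ hAbdd
  have hneg : ∀ t ∈ Ioc (sSup A) b, w t < 0 := fun t ht => by
    by_contra! h
    have htA : t ∈ A := ⟨⟨hcA.1.1.trans ht.1.le, ht.2⟩, h⟩
    exact (le_csSup hAbdd htA).not_gt ht.1
  have hcb : sSup A < b := lt_of_le_of_ne hcA.1.2 fun h => by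
    have : 0 ≤ w b := h ▸ hcA.2
    linarith
  refine ⟨sSup A, ⟨hcA.1.1, hcb⟩, le_antisymm ?_ hcA.2, hneg⟩
  have : (𝓝[Ioc (sSup A) b] sSup A).NeBot := left_nhdsWithin_Ioc_neBot hcb
  exact le_of_tendsto ((hw _ hcA.1).mono (Ioc_subset_Icc_self.trans (Icc_subset_Icc_left hcA.1.1)))
    (eventually_nhdsWithin_of_forall fun t ht => (hneg t ht).le)

theorem HasDerivWithinAt.hasDerivAt_extend_left {w : ℝ → ℝ} {c d : ℝ}
    (hw : HasDerivWithinAt w d (Ici c) c) :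
    HasDerivAt (fun t => if t < c then w c + d * (t - c) else w t) d c := by
  have hlin : HasDerivAt (fun t => w c + d * (t - c)) d c := by
    simpa using ((hasDerivAt_id c).sub_const c).const_mul d |>.const_add (w c)
  have hleft : HasDerivWithinAt (fun t => if t < c then w c + d * (t - c) else w t) d (Iic c) c :=
    hlin.hasDerivWithinAt.congr (fun t ht => by
      rcases (mem_Iic.mp ht).lt_or_eq with h | rfl <;> simp [*]) (by simp)
  have hright : HasDerivWithinAt (fun t => if t < c then w c + d * (t - c) else w t) d (Ici c) c :=
    hw.congr (fun t ht => if_neg (not_lt.2 ht)) (if_neg (lt_irrefl c))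
  simpa [Iic_union_Ici] using hleft.union hright

/-- The `(1 / 2) ^ k` shift makes the approximations lie strictly above `g` and decrease strictly
in `k`, which is what the strict comparison principle needs. -/
noncomputable def supConv (g : ℝ × ℝ → ℝ) (k : ℕ) (p : ℝ × ℝ) : ℝ :=
  (⨆ z : ℝ, g (p.1, z) - ((k : ℝ) + 1) * |p.2 - z|) + (1 / 2) ^ k

section SupConv

variable {g : ℝ × ℝ → ℝ} {B : ℝ}

lemma bddAbove_range_supConv (hB : ∀ p, |g p| ≤ B) (k : ℕ) (t y : ℝ) :
    BddAbove (range fun z : ℝ => g (t, z) - ((k : ℝ) + 1) * |y - z|) := by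
  refine ⟨B, ?_⟩
  rintro _ ⟨z, rfl⟩
  have : 0 ≤ ((k : ℝ) + 1) * |y - z| := by positivity
  linarith [(abs_le.mp (hB (t, z))).2]

lemma le_supConv (hB : ∀ p, |g p| ≤ B) (k : ℕ) (p : ℝ × ℝ) :
    g p + (1 / 2) ^ k ≤ supConv g k p := by
  have := le_ciSup (bddAbove_range_supConv hB k p.1 p.2) p.2
  simpa [supConv] using this

lemma supConv_le (hB : ∀ p, |g p| ≤ B) (k : ℕ) (p : ℝ × ℝ) :
    supConv g k p ≤ B + (1 / 2) ^ k := by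
  refine add_le_add_left (ciSup_le fun z => ?_) _
  have : 0 ≤ ((k : ℝ) + 1) * |p.2 - z| := by positivity
  linarith [(abs_le.mp (hB (p.1, z))).2]

lemma abs_supConv_le (hB : ∀ p, |g p| ≤ B) (k : ℕ) (p : ℝ × ℝ) : |supConv g k p| ≤ B + 1 := by
  have hpow : (0 : ℝ) < (1 / 2) ^ k := by positivity
  have hpow' : ((1 : ℝ) / 2) ^ k ≤ 1 := pow_le_one₀ (by norm_num) (by norm_num)
  rw [abs_le]
  constructor <;>
    linarith [le_supConv hB k p, supConv_le hB k p, (abs_le.mp (hB p)).1]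

lemma supConv_succ_lt (hB : ∀ p, |g p| ≤ B) (k : ℕ) (p : ℝ × ℝ) :
    supConv g (k + 1) p < supConv g k p := by
  have hsup : (⨆ z : ℝ, g (p.1, z) - ((k : ℝ) + 1 + 1) * |p.2 - z|) ≤
      ⨆ z : ℝ, g (p.1, z) - ((k : ℝ) + 1) * |p.2 - z| :=
    ciSup_mono (bddAbove_range_supConv hB k p.1 p.2) fun z => by
      have : 0 ≤ |p.2 - z| := abs_nonneg _
      nlinarith
  have hpow : ((1 : ℝ) / 2) ^ (k + 1) < (1 / 2) ^ k :=
    pow_lt_pow_right_of_lt_one₀ (by norm_num) (by norm_num) k.lt_succ_self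
  simp only [supConv, Nat.cast_succ]
  linarith

lemma supConv_le_supConv_add (hB : ∀ p, |g p| ≤ B) (k : ℕ) {p q : ℝ × ℝ} {ε : ℝ}
    (hpq : ∀ z, g (p.1, z) ≤ g (q.1, z) + ε) :
    supConv g k p ≤ supConv g k q + ε + ((k : ℝ) + 1) * |p.2 - q.2| := by
  have : (⨆ z : ℝ, g (p.1, z) - ((k : ℝ) + 1) * |p.2 - z|) ≤
      (⨆ z : ℝ, g (q.1, z) - ((k : ℝ) + 1) * |q.2 - z|) + ε + ((k : ℝ) + 1) * |p.2 - q.2| := by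
    refine ciSup_le fun z => ?_
    have hq := le_ciSup (bddAbove_range_supConv hB k q.1 q.2) z
    have htri : |q.2 - z| ≤ |p.2 - q.2| + |p.2 - z| := by
      rw [abs_sub_comm p.2 q.2]; exact abs_sub_le _ _ _
    have : ((k : ℝ) + 1) * |q.2 - z| ≤ ((k : ℝ) + 1) * (|p.2 - q.2| + |p.2 - z|) :=
      mul_le_mul_of_nonneg_left htri (by positivity)
    linarith [hpq z]
  simp only [supConv]
  linarith

lemma lipschitzWith_supConv (hB : ∀ p, |g p| ≤ B) (k : ℕ) (t : ℝ) :
    LipschitzWith ((k : ℝ) + 1).toNNReal fun y => supConv g k (t, y) := by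
  refine LipschitzWith.of_le_add_mul _ fun y y' => ?_
  have := supConv_le_supConv_add hB k (p := (t, y)) (q := (t, y')) (ε := 0) fun z => by simp
  rw [Real.coe_toNNReal _ (by positivity), Real.dist_eq]
  simpa using this

lemma continuous_supConv (hB : ∀ p, |g p| ≤ B) (hg : UniformContinuous g) (k : ℕ) :
    Continuous (supConv g k) := by
  refine Metric.continuous_iff.mpr fun p ε hε => ?_
  obtain ⟨δ, hδ, hgδ⟩ := Metric.uniformContinuous_iff.mp hg (ε / 2) (by positivity)
  refine ⟨min δ (ε / (4 * ((k : ℝ) + 1))), by positivity, fun {q} hq => ?_⟩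
  rw [Prod.dist_eq, max_lt_iff, lt_min_iff, lt_min_iff] at hq
  have h1 : dist q.1 p.1 < δ := hq.1.1
  have h2 : |q.2 - p.2| < ε / (4 * ((k : ℝ) + 1)) := hq.2.2
  have hclose : ∀ a b : ℝ, dist a b < δ → ∀ z, g (a, z) ≤ g (b, z) + ε / 2 := fun a b hab z => by
    have := hgδ (a := (a, z)) (b := (b, z)) (by rwa [dist_prod_same_right])
    linarith [(abs_lt.mp (Real.dist_eq _ _ ▸ this)).2]
  have hpen : ((k : ℝ) + 1) * |q.2 - p.2| ≤ ε / 4 := by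
    calc ((k : ℝ) + 1) * |q.2 - p.2| ≤ ((k : ℝ) + 1) * (ε / (4 * ((k : ℝ) + 1))) := by gcongr
      _ = ε / 4 := by field_simp
  have hqp := supConv_le_supConv_add hB k (hclose q.1 p.1 h1)
  have hpq := supConv_le_supConv_add hB k (p := p) (q := q)
    (hclose p.1 q.1 (dist_comm q.1 p.1 ▸ h1))
  rw [abs_sub_comm] at hpq
  rw [Real.dist_eq, abs_lt]
  constructor <;> linarith

lemma eventually_supConv_le_add (hB : ∀ p, |g p| ≤ B) (hg : UniformContinuous g) {ε : ℝ}
    (hε : 0 < ε) :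
    ∀ᶠ k in atTop, ∀ p, supConv g k p ≤ g p + ε := by
  obtain ⟨δ, hδ, hgδ⟩ := Metric.uniformContinuous_iff.mp hg (ε / 2) (by positivity)
  have hpow : ∀ᶠ k : ℕ in atTop, ((1 : ℝ) / 2) ^ k < ε / 2 :=
    (tendsto_pow_atTop_nhds_zero_of_lt_one (by norm_num) (by norm_num)).eventually
      (gt_mem_nhds (by positivity))
  have hlarge : ∀ᶠ k : ℕ in atTop, 2 * B ≤ ((k : ℝ) + 1) * δ := by
    obtain ⟨N, hN⟩ := exists_nat_ge (2 * B / δ)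
    filter_upwards [eventually_ge_atTop N] with k hk
    have : 2 * B / δ ≤ (k : ℝ) + 1 := by linarith [(Nat.cast_le (α := ℝ)).mpr hk]
    rwa [div_le_iff₀ hδ] at this
  filter_upwards [hpow, hlarge] with k hpowk hk p
  have hsup : (⨆ z : ℝ, g (p.1, z) - ((k : ℝ) + 1) * |p.2 - z|) ≤ g p + ε / 2 := by
    refine ciSup_le fun z => ?_
    have hpen : 0 ≤ ((k : ℝ) + 1) * |p.2 - z| := by positivity
    by_cases hz : |p.2 - z| < δ
    · have := hgδ (a := (p.1, z)) (b := p)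
        (by rwa [dist_prod_same_left, Real.dist_eq, abs_sub_comm])
      linarith [(abs_lt.mp (Real.dist_eq _ _ ▸ this)).2]
    · have : ((k : ℝ) + 1) * δ ≤ ((k : ℝ) + 1) * |p.2 - z| := by gcongr; linarith
      linarith [(abs_le.mp (hB (p.1, z))).2, (abs_le.mp (hB p)).1]
  simp only [supConv]
  linarith

lemma tendsto_supConv (hB : ∀ p, |g p| ≤ B) (hg : UniformContinuous g) (t : ℝ)
    {z : ℕ → ℝ} {Z : ℝ} (hz : Tendsto z atTop (𝓝 Z)) :
    Tendsto (fun k => supConv g k (t, z k)) atTop (𝓝 (g (t, Z))) := by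
  have hlim : Tendsto (fun k => g (t, z k)) atTop (𝓝 (g (t, Z))) :=
    (hg.continuous.tendsto _).comp (tendsto_const_nhds.prodMk_nhds hz)
  have hgap : Tendsto (fun k => supConv g k (t, z k) - g (t, z k)) atTop (𝓝 0) := by
    refine tendsto_order.2 ⟨fun a ha => Eventually.of_forall fun k => ?_, fun b hb => ?_⟩
    · have : (0 : ℝ) < (1 / 2) ^ k := by positivity
      linarith [le_supConv hB k (t, z k)]
    · filter_upwards [eventually_supConv_le_add hB hg (half_pos hb)] with k hk
      linarith [hk (t, z k)]
  simpa using hgap.add hlim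

end SupConv

section Approximation

variable {g : ℝ × ℝ → ℝ} {B a b : ℝ}

theorem hasDerivWithinAt_of_tendsto_supConv_solutions (hB : ∀ p, |g p| ≤ B)
    (hg : UniformContinuous g) {y : ℕ → ℝ → ℝ} {Y : ℝ → ℝ}
    (hy : ∀ k, ∀ t ∈ Icc a b, HasDerivWithinAt (y k) (supConv g k (t, y k t)) (Icc a b) t)
    (hY : ∀ t ∈ Icc a b, Tendsto (fun k => y k t) atTop (𝓝 (Y t))) :
    ∀ t ∈ Icc a b, HasDerivWithinAt Y (g (t, Y t)) (Icc a b) t := by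
  have hlip : ∀ k, LipschitzOnWith (B + 1).toNNReal (y k) (Icc a b) := fun k =>
    (convex_Icc a b).lipschitzOnWith_of_nnnorm_hasDerivWithin_le (hy k) fun t _ => by
      rw [← NNReal.coe_le_coe, coe_nnnorm, Real.norm_eq_abs]
      exact (abs_supConv_le hB k _).trans (Real.le_coe_toNNReal _)
  have hYcont : ContinuousOn Y (Icc a b) := (LipschitzOnWith.of_tendsto hlip hY).continuousOn
  have hφ : ContinuousOn (fun s => g (s, Y s)) (Icc a b) :=
    hg.continuous.comp_continuousOn (continuousOn_id.prodMk hYcont)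
  have hφk : ∀ k, ContinuousOn (fun s => supConv g k (s, y k s)) (Icc a b) := fun k =>
    (continuous_supConv hB hg k).comp_continuousOn (continuousOn_id.prodMk (hlip k).continuousOn)
  refine fun t ht => hasDerivWithinAt_of_eq_add_integral hφ (fun t ht => ?_) ht
  have hsub : Icc a t ⊆ Icc a b := Icc_subset_Icc_right ht.2
  have hftc : ∀ k, y k t = y k a + ∫ s in a..t, supConv g k (s, y k s) := fun k => by
    rw [intervalIntegral.integral_eq_sub_of_hasDeriv_right_of_le ht.1
      ((hlip k).continuousOn.mono hsub)
      (fun s hs => ((hy k s (hsub (Ioo_subset_Icc_self hs))).hasDerivAt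
        (Icc_mem_nhds hs.1 (hs.2.trans_le ht.2))).hasDerivWithinAt)
      (((hφk k).mono hsub).intervalIntegrable_of_Icc ht.1)]
    ring
  have hdct : Tendsto (fun k => ∫ s in a..t, supConv g k (s, y k s)) atTop
      (𝓝 (∫ s in a..t, g (s, Y s))) := by
    have hIoc : uIoc a t ⊆ Icc a b := by
      rw [uIoc_of_le ht.1]; exact Ioc_subset_Icc_self.trans hsub
    refine intervalIntegral.tendsto_integral_filter_of_dominated_convergence (fun _ => B + 1)
      (Eventually.of_forall fun k => ((hφk k).mono hIoc).aestronglyMeasurable measurableSet_uIoc)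
      (Eventually.of_forall fun k => MeasureTheory.ae_of_all _ fun s _ => abs_supConv_le hB k _)
      intervalIntegrable_const (MeasureTheory.ae_of_all _ fun s hs => ?_)
    exact tendsto_supConv hB hg s (hY s (hIoc hs))
  exact tendsto_nhds_unique (hY t ht) (by
    simpa only [← hftc] using ((hY a (left_mem_Icc.2 (ht.1.trans ht.2))).add hdct))


theorem exists_solution_ge_of_subsolution (hB : ∀ p, |g p| ≤ B) (hg : UniformContinuous g)
    (hab : a ≤ b) {u du : ℝ → ℝ} (hu : ∀ t ∈ Icc a b, HasDerivWithinAt u (du t) (Icc a b) t)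
    (hsub : ∀ t ∈ Icc a b, du t ≤ g (t, u t)) :
    ∃ w : ℝ → ℝ, w a = u a ∧
      ∀ t ∈ Icc a b, HasDerivWithinAt w (g (t, w t)) (Icc a b) t ∧ u t ≤ w t := by
  have happrox : ∀ k : ℕ, ∃ y : ℝ → ℝ, y a = u a + (1 / 2) ^ k ∧
      ∀ t ∈ Icc a b, HasDerivWithinAt y (supConv g k (t, y t)) (Icc a b) t := fun k =>
    exists_forall_mem_Icc_hasDerivWithinAt_of_lipschitzWith (L := (B + 1).toNNReal) hab
      (lipschitzWith_supConv hB k) (fun z => (continuous_supConv hB hg k).comp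
        (continuous_id.prodMk continuous_const))
      (fun t z => (abs_supConv_le hB k _).trans (Real.le_coe_toNNReal _)) _
  choose y hy0 hy using happrox
  have hpow : ∀ k : ℕ, (0 : ℝ) < (1 / 2) ^ k := fun k => by positivity
  have hanti : ∀ t ∈ Icc a b, Antitone fun k => y k t := fun t ht =>
    antitone_nat_of_succ_le fun k =>
      le_of_forall_mem_Icc_hasDerivWithinAt_of_lt (hy (k + 1)) (hy k)
        (by
          rw [hy0, hy0]
          linarith [pow_le_pow_of_le_one (a := (1 / 2 : ℝ)) (by norm_num) (by norm_num)
            (Nat.le_add_right k 1)])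
        (fun s _ hs => hs ▸ supConv_succ_lt hB k (s, y k s)) t ht
  have hle : ∀ k, ∀ t ∈ Icc a b, u t ≤ y k t := fun k =>
    le_of_forall_mem_Icc_hasDerivWithinAt_of_lt hu (hy k) (by linarith [hy0 k, hpow k])
      fun s hs hus => by
        have hdu := hsub s (Ico_subset_Icc_self hs)
        rw [hus] at hdu
        linarith [hpow k, le_supConv hB k (s, y k s)]
  have hbdd : ∀ t ∈ Icc a b, BddBelow (range fun k => y k t) := fun t ht =>
    ⟨u t, by rintro _ ⟨k, rfl⟩; exact hle k t ht⟩
  have hlim : ∀ t ∈ Icc a b, Tendsto (fun k => y k t) atTop (𝓝 (⨅ k, y k t)) := fun t ht =>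
    tendsto_atTop_ciInf (hanti t ht) (hbdd t ht)
  refine ⟨fun t => ⨅ k, y k t, ?_, fun t ht =>
    ⟨hasDerivWithinAt_of_tendsto_supConv_solutions hB hg hy hlim t ht,
      le_ciInf fun k => hle k t ht⟩⟩
  refine tendsto_nhds_unique (hlim a (left_mem_Icc.2 hab)) ?_
  simpa [hy0] using tendsto_const_nhds.add
    (tendsto_pow_atTop_nhds_zero_of_lt_one (by norm_num : (0 : ℝ) ≤ 1 / 2) (by norm_num))


theorem exists_solution_ge_of_supersolution_backward (hB : ∀ p, |g p| ≤ B)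
    (hg : UniformContinuous g) (hab : a ≤ b) {v dv : ℝ → ℝ}
    (hv : ∀ t ∈ Icc a b, HasDerivWithinAt v (dv t) (Icc a b) t)
    (hsup : ∀ t ∈ Icc a b, g (t, v t) ≤ dv t) :
    ∃ w : ℝ → ℝ, w b = v b ∧
      ∀ t ∈ Icc a b, HasDerivWithinAt w (g (t, w t)) (Icc a b) t ∧ v t ≤ w t := by
  have hreflect : ∀ t ∈ Icc a b, a + b - t ∈ Icc a b := fun t ht =>
    ⟨by linarith [ht.2], by linarith [ht.1]⟩
  obtain ⟨W, hW0, hW⟩ := exists_solution_ge_of_subsolution (g := fun p => -g (a + b - p.1, p.2))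
    (fun p => by simpa using hB _)
    (hg.comp ((uniformContinuous_const.sub uniformContinuous_fst).prodMk uniformContinuous_snd)).neg
    hab (fun t ht => (hv _ (hreflect t ht)).comp_reflect_Icc)
    (fun t ht => neg_le_neg (hsup _ (hreflect t ht)))
  refine ⟨fun t => W (a + b - t), by simpa using hW0, fun t ht => ⟨?_, ?_⟩⟩
  · simpa using (hW _ (hreflect t ht)).1.comp_reflect_Icc
  · simpa using (hW _ (hreflect t ht)).2

end Approximation

def IsTimeVaryingMinimal (μ : ℝ × ℝ → ℝ) : Prop :=
  ∀ t₀ : ℝ, 0 ≤ t₀ → ∀ τ : ℝ, ∀ w : ℝ → ℝ, w t₀ = 0 →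
    (∀ t ∈ Ico t₀ τ, HasDerivAt w (-μ (t, w t)) t) → ∀ t ∈ Ico t₀ τ, 0 ≤ w t

namespace IsTimeVaryingMinimal

variable {μ : ℝ × ℝ → ℝ}

theorem nonneg_of_hasDerivWithinAt_Icc (hμ : IsTimeVaryingMinimal μ) {c b : ℝ} (hc : 0 ≤ c)
    {w : ℝ → ℝ} (hw0 : w c = 0)
    (hw : ∀ t ∈ Icc c b, HasDerivWithinAt w (-μ (t, w t)) (Icc c b) t) :
    ∀ t ∈ Ico c b, 0 ≤ w t := by
  intro t ht
  -- Extending `w` linearly to the left of `c` makes it differentiable at `c`.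
  set w' : ℝ → ℝ := fun s => if s < c then w c + -μ (c, w c) * (s - c) else w s
  have hw' : ∀ s ∈ Ico c b, w' s = w s := fun s hs => if_neg (not_lt.2 hs.1)
  have hderiv : ∀ s ∈ Ico c b, HasDerivAt w' (-μ (s, w' s)) s := by
    intro s hs
    rw [hw' s hs]
    rcases hs.1.eq_or_lt with rfl | hcs
    · exact ((hw c (Ico_subset_Icc_self hs)).mono_of_mem_nhdsWithin
        (Icc_mem_nhdsGE hs.2)).hasDerivAt_extend_left
    · refine ((hw s (Ico_subset_Icc_self hs)).hasDerivAt
        (Icc_mem_nhds hcs hs.2)).congr_of_eventuallyEq ?_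
      filter_upwards [lt_mem_nhds hcs] with r hr using if_neg (not_lt.2 hr.le)
  simpa [hw' t ht] using hμ c hc b w' (by simp [w', hw0]) hderiv t ht

theorem nonneg_of_supersolution (hμ : IsTimeVaryingMinimal μ)
    (hμc : ContinuousOn μ (Ici 0 ×ˢ univ)) {a b : ℝ} (ha : 0 ≤ a) (hab : a ≤ b) {v dv : ℝ → ℝ}
    (hv : ∀ t ∈ Icc a b, HasDerivWithinAt v (dv t) (Icc a b) t)
    (hsup : ∀ t ∈ Icc a b, -μ (t, v t) ≤ dv t) (hva : 0 ≤ v a) : 0 ≤ v b := by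
  by_contra! hvb
  obtain ⟨K, hK⟩ := isCompact_Icc.exists_bound_of_continuousOn
    fun t ht => (hv t ht).continuousWithinAt
  have hbox : ∀ t ∈ Icc a b, (t, v t) ∈ Icc a b ×ˢ Icc (-K) K := fun t ht =>
    ⟨ht, abs_le.mp (hK t ht)⟩
  obtain ⟨g, hg, ⟨B, hB⟩, hgμ⟩ := exists_uniformContinuous_bounded_eqOn (c := -K) (d := K) hab
    (by linarith [(norm_nonneg _).trans (hK a (left_mem_Icc.2 hab))])
    (hμc.mono fun p hp => ⟨ha.trans hp.1.1, trivial⟩)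
  obtain ⟨w, hwb, hw⟩ := exists_solution_ge_of_supersolution_backward (g := fun p => -g p)
    (by simpa using hB) hg.neg hab hv (fun t ht => by simpa [hgμ (hbox t ht)] using hsup t ht)
  obtain ⟨c, hc, hwc, hwneg⟩ := exists_eq_zero_forall_lt_zero_of_continuousOn hab
    (fun t ht => (hw t ht).1.continuousWithinAt) (hva.trans (hw a (left_mem_Icc.2 hab)).2)
    (hwb ▸ hvb)
  -- After its last zero `c`, `w` lies between `v` and `0`, where `g` agrees with `μ`.
  have hsub : Icc c b ⊆ Icc a b := Icc_subset_Icc_left hc.1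
  have hsol : ∀ t ∈ Icc c b, HasDerivWithinAt w (-μ (t, w t)) (Icc c b) t := fun t ht => by
    have hKt := abs_le.mp (hK t (hsub ht))
    have hwt : w t ≤ 0 := by
      rcases ht.1.eq_or_lt with hct | hct
      · exact (hct ▸ hwc).le
      · exact (hwneg t ⟨hct, ht.2⟩).le
    have hgt : g (t, w t) = μ (t, w t) :=
      hgμ (show (t, w t) ∈ _ from ⟨hsub ht, by linarith [(hw t (hsub ht)).2], by linarith⟩)
    simpa [hgt] using (hw t (hsub ht)).1.mono hsub
  have hmid : (c + b) / 2 ∈ Ioo c b := ⟨by linarith [hc.2], by linarith [hc.2]⟩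
  exact (hwneg _ (Ioo_subset_Ioc_self hmid)).not_ge
    (hμ.nonneg_of_hasDerivWithinAt_Icc (ha.trans hc.1) hwc hsol _ (Ioo_subset_Ico_self hmid))

end IsTimeVaryingMinimal

theorem time_varying_minimal_barrier_invariance_general
    {n : ℕ} (D : Set (EuclideanSpace ℝ (Fin n)))
    (f : ℝ × EuclideanSpace ℝ (Fin n) → EuclideanSpace ℝ (Fin n))
    (h : ℝ × EuclideanSpace ℝ (Fin n) → ℝ)
    (hh : ContDiffOn ℝ 1 h (Set.Ici (0 : ℝ) ×ˢ D))
    (μ : ℝ × ℝ → ℝ) (hμc : ContinuousOn μ (Set.Ici (0 : ℝ) ×ˢ Set.univ))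
    -- (i) μ is a time-varying minimal function
    (hμmin : ∀ t₀ : ℝ, 0 ≤ t₀ → ∀ τ : ℝ, ∀ w : ℝ → ℝ, w t₀ = 0 →
      (∀ t ∈ Set.Ico t₀ τ, HasDerivAt w (-μ (t, w t)) t) →
      ∀ t ∈ Set.Ico t₀ τ, 0 ≤ w t)
    -- (ii) the time-varying barrier condition
    (hbar : ∀ t : ℝ, 0 ≤ t → ∀ x ∈ D,
      -μ (t, h (t, x)) ≤
        fderivWithin ℝ h (Set.Ici (0 : ℝ) ×ˢ D) (t, x) (1, f (t, x)))
    (t₀ : ℝ) (ht₀ : 0 ≤ t₀) (τ : ℝ) (x : ℝ → EuclideanSpace ℝ (Fin n))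
    (hxD : ∀ t ∈ Set.Ico t₀ τ, x t ∈ D)
    (hxsol : ∀ t ∈ Set.Ico t₀ τ, HasDerivAt x (f (t, x t)) t)
    (hx0 : 0 ≤ h (t₀, x t₀)) :
    ∀ t ∈ Set.Ico t₀ τ, 0 ≤ h (t, x t) := by
  intro t ht
  have hsub : Icc t₀ t ⊆ Ico t₀ τ := Icc_subset_Ico_right ht.2
  have hgraph : MapsTo (fun r => (r, x r)) (Icc t₀ t) (Ici 0 ×ˢ D) := fun r hr =>
    ⟨ht₀.trans hr.1, hxD r (hsub hr)⟩
  refine IsTimeVaryingMinimal.nonneg_of_supersolution hμmin hμc ht₀ ht.1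
    (v := fun r => h (r, x r)) (fun r hr => ?_)
    (fun r hr => hbar r (ht₀.trans hr.1) _ (hxD r (hsub hr))) hx0
  exact ((hh.differentiableOn one_ne_zero _ (hgraph hr)).hasFDerivWithinAt.comp_hasDerivWithinAt r
    ((hasDerivAt_id r).prodMk (hxsol r (hsub hr))).hasDerivWithinAt hgraph)

/-- Theorem 7: time-varying minimal barrier functions. If `μ` is a
time-varying minimal function and the time-varying barrier condition
`∂h/∂t(t,x) + ∇_x h(t,x)·f(t,x) ≥ −μ(t, h(t,x))` holds on `[0,∞) × D` (expressed as the
derivative of `h` within `[0,∞) × D` in the direction `(1, f(t,x))`), then any solution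
starting in `S_{t₀}` remains in `S_t`. -/
theorem time_varying_minimal_barrier_invariance
    {n : ℕ} (D : Set (EuclideanSpace ℝ (Fin n))) (hD : IsOpen D)
    (f : ℝ × EuclideanSpace ℝ (Fin n) → EuclideanSpace ℝ (Fin n))
    (hf : ContinuousOn f (Set.Ici (0 : ℝ) ×ˢ D))
    (h : ℝ × EuclideanSpace ℝ (Fin n) → ℝ)
    (hh : ContDiffOn ℝ 1 h (Set.Ici (0 : ℝ) ×ˢ D))
    (hSne : ∀ t : ℝ, 0 ≤ t → ∃ x ∈ D, 0 ≤ h (t, x))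
    (μ : ℝ × ℝ → ℝ) (hμc : ContinuousOn μ (Set.Ici (0 : ℝ) ×ˢ Set.univ))
    -- (i) μ is a time-varying minimal function
    (hμmin : ∀ t₀ : ℝ, 0 ≤ t₀ → ∀ τ : ℝ, ∀ w : ℝ → ℝ, w t₀ = 0 →
      (∀ t ∈ Set.Ico t₀ τ, HasDerivAt w (-μ (t, w t)) t) →
      ∀ t ∈ Set.Ico t₀ τ, 0 ≤ w t)
    -- (ii) the time-varying barrier condition
    (hbar : ∀ t : ℝ, 0 ≤ t → ∀ x ∈ D,
      -μ (t, h (t, x)) ≤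
        fderivWithin ℝ h (Set.Ici (0 : ℝ) ×ˢ D) (t, x) (1, f (t, x)))
    (t₀ : ℝ) (ht₀ : 0 ≤ t₀) (τ : ℝ) (x : ℝ → EuclideanSpace ℝ (Fin n))
    (hxD : ∀ t ∈ Set.Ico t₀ τ, x t ∈ D)
    (hxsol : ∀ t ∈ Set.Ico t₀ τ, HasDerivAt x (f (t, x t)) t)
    (hx0 : 0 ≤ h (t₀, x t₀)) :
    ∀ t ∈ Set.Ico t₀ τ, 0 ≤ h (t, x t) :=
  time_varying_minimal_barrier_invariance_general D f h hh μ hμc hμmin hbar t₀ ht₀ τ x hxD hxsol hx0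
end

section
/- Let g : ℝ → ℝ be continuous and let w : [0,τ) → ℝ be any differentiable function with ẇ(t) = g(w(t)) for all t ∈ [0,τ). Then w is monotone on [0,τ), i.e. w is either nondecreasing on [0,τ) or nonincreasing on [0,τ). -/
/-!
A solution of `ẇ = g(w)` cannot make a strict peak `w a < w b > w c` with `a < b < c`. Pick a
level `y` strictly between `max (w a) (w c)` and `w b`. On `[a, b]` the solution rises from below
`y` to `w b`; if `g` were `≤ 0` on `[y, w b)`, it could not cross the line of small positive slope
starting at height `y`, so `g z > 0` for some `z ∈ [y, w b)`. But a level `z` with `g z > 0` can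
only be crossed upwards, so on `[b, c]` the solution stays `≥ z > w c`, a contradiction. Valleys
are peaks of `-w`, which solves `ẇ = -g(-w)`, and a function on an interval without strict peaks
and valleys is monotone or antitone.
-/

open Set

def IsAutonomousSolution (g w : ℝ → ℝ) (s : Set ℝ) : Prop :=
  ∀ t ∈ s, HasDerivAt w (g (w t)) t

namespace IsAutonomousSolution

variable {g w : ℝ → ℝ} {s : Set ℝ} {a b c y z : ℝ}

theorem mono {s' : Set ℝ} (h : IsAutonomousSolution g w s) (hs : s' ⊆ s) :
    IsAutonomousSolution g w s' :=
  fun t ht => h t (hs ht)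

theorem continuousOn (h : IsAutonomousSolution g w s) : ContinuousOn w s :=
  fun t ht => (h t ht).continuousAt.continuousWithinAt

theorem neg (h : IsAutonomousSolution g w s) :
    IsAutonomousSolution (fun z => -g (-z)) (-w) s := by
  intro t ht
  simpa only [Pi.neg_apply, neg_neg] using (h t ht).neg

theorem le_of_le_of_pos (h : IsAutonomousSolution g w (Icc a b)) (hab : a ≤ b) (hz : z ≤ w a)
    (hgz : 0 < g z) : z ≤ w b :=
  image_le_of_deriv_right_lt_deriv_boundary' continuousOn_const
    (fun _ _ => hasDerivWithinAt_const _ _ z) hz h.continuousOn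
    (fun t ht => (h t (Ico_subset_Icc_self ht)).hasDerivWithinAt)
    (fun t _ hzt => by rwa [← hzt]) ⟨hab, le_rfl⟩

theorem exists_pos_of_le_of_lt (h : IsAutonomousSolution g w (Icc a b)) (hab : a ≤ b)
    (hay : w a ≤ y) (hyb : y < w b) : ∃ z ∈ Ico y (w b), 0 < g z := by
  by_contra! hg
  have hab' : a < b := hab.lt_of_ne (by rintro rfl; linarith)
  set ε := (w b - y) / (2 * (b - a))
  have hε : 0 < ε := div_pos (by linarith) (by linarith)
  have hεb : ε * (b - a) = (w b - y) / 2 := by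
    simp only [ε]; field_simp [(sub_pos.2 hab').ne']
  -- the barrier `t ↦ y + ε (t - a)` stays in `[y, w b)` on `[a, b]`, where `g ≤ 0 < ε`
  have hbarrier := image_le_of_deriv_right_lt_deriv_boundary (B := fun t => y + ε * (t - a))
    h.continuousOn (fun t ht => (h t (Ico_subset_Icc_self ht)).hasDerivWithinAt)
    (by simpa using hay)
    (fun t => by simpa using ((hasDerivAt_id t).sub_const a).const_mul ε |>.const_add y)
    (fun t ht hwt => (hg _ ⟨by nlinarith [ht.1], by nlinarith [ht.2]⟩).trans_lt hε)
    ⟨hab, le_rfl⟩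
  linarith

theorem le_max_of_mem_Icc (h : IsAutonomousSolution g w (Icc a c)) (hb : b ∈ Icc a c) :
    w b ≤ max (w a) (w c) := by
  by_contra! hpeak
  obtain ⟨z, hz, hgz⟩ := (h.mono (Icc_subset_Icc_right hb.2)).exists_pos_of_le_of_lt
    (y := (max (w a) (w c) + w b) / 2) hb.1 (by linarith [le_max_left (w a) (w c)]) (by linarith)
  have hzc : z ≤ w c := (h.mono (Icc_subset_Icc_left hb.1)).le_of_le_of_pos hb.2 hz.2.le hgz
  linarith [le_max_right (w a) (w c), hz.1]

theorem min_le_of_mem_Icc (h : IsAutonomousSolution g w (Icc a c)) (hb : b ∈ Icc a c) :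
    min (w a) (w c) ≤ w b := by
  have := h.neg.le_max_of_mem_Icc hb
  simp only [Pi.neg_apply, max_neg_neg] at this
  linarith

theorem monotoneOn_or_antitoneOn (h : IsAutonomousSolution g w s) (hs : s.OrdConnected) :
    MonotoneOn w s ∨ AntitoneOn w s := by
  by_contra! hw
  obtain ⟨a, ha, b, hb, c, hc, hab, hbc, hpeak | hvalley⟩ :=
    not_monotoneOn_not_antitoneOn_iff_exists_lt_lt.1 hw
  · have := (h.mono (hs.out ha hc)).le_max_of_mem_Icc ⟨hab.le, hbc.le⟩
    exact this.not_gt (max_lt hpeak.1 hpeak.2)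
  · have := (h.mono (hs.out ha hc)).min_le_of_mem_Icc ⟨hab.le, hbc.le⟩
    exact this.not_gt (lt_min hvalley.1 hvalley.2)

end IsAutonomousSolution

theorem scalar_autonomous_solution_monotone_general
    (g : ℝ → ℝ) (τ : ℝ) (w : ℝ → ℝ)
    (hw : ∀ t ∈ Set.Ico (0 : ℝ) τ, HasDerivAt w (g (w t)) t) :
    MonotoneOn w (Set.Ico (0 : ℝ) τ) ∨ AntitoneOn w (Set.Ico (0 : ℝ) τ) :=
  IsAutonomousSolution.monotoneOn_or_antitoneOn hw ordConnected_Ico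

/-- any solution of a scalar autonomous ODE `ẇ = g(w)` with `g` continuous is
monotone on its interval of existence `[0,τ)`. -/
theorem scalar_autonomous_solution_monotone
    (g : ℝ → ℝ) (hg : Continuous g) (τ : ℝ) (w : ℝ → ℝ)
    (hw : ∀ t ∈ Set.Ico (0 : ℝ) τ, HasDerivAt w (g (w t)) t) :
    MonotoneOn w (Set.Ico (0 : ℝ) τ) ∨ AntitoneOn w (Set.Ico (0 : ℝ) τ) :=
  scalar_autonomous_solution_monotone_general g τ w hw
end

section
/- Define μ : (−1,1) → ℝ by μ(w) = −w·log(w) for 0 < w < 1, μ(w) = w·log(−w) for −1 < w < 0, and μ(0) = 0. Then μ is continuous, and every differentiable w : [0,τ) → (−1,1) with w(0) = 0 and ẇ(t) = −μ(w(t)) for all t ∈ [0,τ) satisfies w(t) ≥ 0 for all t ∈ [0,τ); moreover μ is not locally Lipschitz at 0. -/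
/-!
Where `w < 0`, the equation `ẇ = -μ(w)` reads `v̇ = -v log v` for `v = -w > 0`, so `log v`
solves `L̇ = -L` and `exp t · log v(t)` is constant. Hence `log v` stays bounded on bounded time
intervals and `v` cannot emerge from `0`. The Lipschitz property fails at `0` because
`μ(x)/x = -log x → ∞` as `x → 0⁺`.
-/

open Real in
/-- The comparison function of Example 3: `μ(w) = −w·log w` for `0 < w < 1`,
`μ(w) = w·log(−w)` for `−1 < w < 0`, and `μ(0) = 0` (note `Real.log 0 = 0`). -/
noncomputable def muEx (w : ℝ) : ℝ :=
  if 0 < w then -w * Real.log w else w * Real.log (-w)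

open Real Set Filter Topology

lemma muEx_eq_negMulLog_abs (w : ℝ) : muEx w = negMulLog |w| := by
  unfold muEx negMulLog
  rcases lt_trichotomy 0 w with h | rfl | h
  · rw [if_pos h, abs_of_pos h]
  · simp
  · rw [if_neg h.not_gt, abs_of_neg h]
    ring

lemma continuous_muEx : Continuous muEx := by
  rw [show muEx = negMulLog ∘ abs from funext muEx_eq_negMulLog_abs]
  exact continuous_negMulLog.comp continuous_abs

lemma exists_last_nonneg_of_continuousOn {f : ℝ → ℝ} {a b : ℝ}
    (hf : ContinuousOn f (Icc a b)) (hab : a ≤ b) (ha : 0 ≤ f a) (hb : f b < 0) :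
    ∃ c ∈ Ico a b, 0 ≤ f c ∧ ∀ t ∈ Ioc c b, f t < 0 := by
  have hclosed : IsClosed (Icc a b ∩ f ⁻¹' Ici 0) :=
    hf.preimage_isClosed_of_isClosed isClosed_Icc isClosed_Ici
  obtain ⟨c, ⟨⟨hac, hcb⟩, hc⟩, hgreatest⟩ :=
    (isCompact_Icc.of_isClosed_subset hclosed inter_subset_left).exists_isGreatest
      ⟨a, ⟨le_rfl, hab⟩, ha⟩
  have hcb' : c < b := hcb.lt_of_ne (by rintro rfl; exact hc.not_gt hb)
  refine ⟨c, ⟨hac, hcb'⟩, hc, fun t ht => ?_⟩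
  by_contra! hft
  exact ht.1.not_ge (hgreatest ⟨⟨hac.trans ht.1.le, ht.2⟩, hft⟩)

section NegMulLogFlow

variable {v : ℝ → ℝ} {a b : ℝ}

lemma hasDerivAt_exp_mul_log_of_hasDerivAt_negMulLog {t : ℝ} (hv : 0 < v t)
    (hderiv : HasDerivAt v (negMulLog (v t)) t) :
    HasDerivAt (fun s => exp s * log (v s)) 0 t := by
  have hlog : HasDerivAt (fun s => log (v s)) (-log (v t)) t := by
    convert hderiv.log hv.ne' using 1
    rw [negMulLog, neg_mul, neg_div, mul_div_cancel_left₀ _ hv.ne']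
  have h := (hasDerivAt_exp t).fun_mul hlog
  rwa [mul_neg, add_neg_cancel] at h

lemma exp_mul_log_eq_of_hasDerivAt_negMulLog (hpos : ∀ t ∈ Ioc a b, 0 < v t)
    (hderiv : ∀ t ∈ Ioc a b, HasDerivAt v (negMulLog (v t)) t) {t : ℝ} (ht : t ∈ Ioc a b) :
    exp t * log (v t) = exp b * log (v b) := by
  have hsub : Icc t b ⊆ Ioc a b := Icc_subset_Ioc_iff ht.2 |>.2 ⟨ht.1, le_rfl⟩
  have hconst : ∀ s ∈ Ioc a b, HasDerivAt (fun s => exp s * log (v s)) 0 s := fun s hs =>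
    hasDerivAt_exp_mul_log_of_hasDerivAt_negMulLog (hpos s hs) (hderiv s hs)
  exact (constant_of_has_deriv_right_zero
    (fun s hs => (hconst s (hsub hs)).continuousAt.continuousWithinAt)
    (fun s hs => (hconst s (hsub (Ico_subset_Icc_self hs))).hasDerivWithinAt) b
    ⟨ht.2, le_rfl⟩).symm

lemma pos_of_hasDerivAt_negMulLog (hab : a < b) (hcont : ContinuousWithinAt v (Ioi a) a)
    (hpos : ∀ t ∈ Ioc a b, 0 < v t)
    (hderiv : ∀ t ∈ Ioc a b, HasDerivAt v (negMulLog (v t)) t) :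
    0 < v a := by
  set C := exp b * log (v b)
  have hbound : ∀ t ∈ Ioc a b, exp (-(|C| / exp a)) ≤ v t := by
    intro t ht
    have hlog : log (v t) = C / exp t := by
      rw [eq_div_iff (exp_pos t).ne', mul_comm]
      exact exp_mul_log_eq_of_hasDerivAt_negMulLog hpos hderiv ht
    have hlog_ge : -(|C| / exp a) ≤ log (v t) := by
      rw [hlog]
      calc -(|C| / exp a) ≤ -(|C| / exp t) :=
            neg_le_neg <|
              div_le_div_of_nonneg_left (abs_nonneg C) (exp_pos a) (exp_le_exp.2 ht.1.le)
        _ = -|C| / exp t := (neg_div _ _).symm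
        _ ≤ C / exp t := div_le_div_of_nonneg_right (neg_abs_le C) (exp_pos t).le
    exact (exp_le_exp.2 hlog_ge).trans_eq (exp_log (hpos t ht))
  exact (exp_pos _).trans_le <| ge_of_tendsto hcont <|
    eventually_of_mem (Ioc_mem_nhdsGT hab) hbound

end NegMulLogFlow

theorem nonneg_of_hasDerivAt_neg_muEx {τ : ℝ} {w : ℝ → ℝ} (hw0 : 0 ≤ w 0)
    (hderiv : ∀ t ∈ Ico 0 τ, HasDerivAt w (-muEx (w t)) t) {t₁ : ℝ}
    (ht₁ : t₁ ∈ Ico 0 τ) : 0 ≤ w t₁ := by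
  by_contra! hneg
  have hsub : Icc 0 t₁ ⊆ Ico 0 τ := Icc_subset_Ico_right ht₁.2
  obtain ⟨c, hc, hwc, hlast⟩ := exists_last_nonneg_of_continuousOn
    (fun t ht => (hderiv t (hsub ht)).continuousAt.continuousWithinAt) ht₁.1 hw0 hneg
  have hsub' : Ioc c t₁ ⊆ Ico 0 τ := fun t ht => hsub ⟨hc.1.trans ht.1.le, ht.2⟩
  have hflow : ∀ t ∈ Ioc c t₁, HasDerivAt (fun s => -w s) (negMulLog (-w t)) t := by
    intro t ht
    have h := (hderiv t (hsub' ht)).neg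
    rwa [neg_neg, muEx_eq_negMulLog_abs, abs_of_neg (hlast t ht)] at h
  have hpos := pos_of_hasDerivAt_negMulLog (v := fun s => -w s) hc.2
    (hderiv c (hsub (Ico_subset_Icc_self hc))).continuousAt.neg.continuousWithinAt
    (fun t ht => neg_pos.2 (hlast t ht)) hflow
  exact (neg_pos.1 hpos).not_ge hwc

lemma not_lipschitzOnWith_muEx {K : NNReal} {s : Set ℝ} (hs : s ∈ 𝓝 0) :
    ¬ LipschitzOnWith K muEx s := by
  intro hlip
  obtain ⟨x, hxs, hlog, hx⟩ : ∃ x, x ∈ s ∧ log x < -K ∧ 0 < x :=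
    (Eventually.and (mem_nhdsWithin_of_mem_nhds hs) <|
      (tendsto_log_nhdsGT_zero.eventually_lt_atBot (-K)).and self_mem_nhdsWithin).exists
  have hμx : muEx x = x * -log x := by
    rw [muEx_eq_negMulLog_abs, abs_of_pos hx, negMulLog, neg_mul, mul_neg]
  have hdist := hlip.dist_le_mul x hxs 0 (mem_of_mem_nhds hs)
  rw [hμx, muEx_eq_negMulLog_abs, abs_zero, negMulLog_zero, dist_zero_right, dist_zero_right,
    Real.norm_of_nonneg (mul_nonneg hx.le (by linarith [K.2])), Real.norm_of_nonneg hx.le,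
    mul_comm (K : ℝ)] at hdist
  linarith [le_of_mul_le_mul_left hdist hx]

/-- Example 3: `μ` is continuous on `(−1,1)`, it is a minimal function on
`(−1,1)` (every solution of `ẇ = −μ(w)`, `w(0) = 0`, staying in `(−1,1)` remains
nonnegative), and `μ` is not locally Lipschitz at `0`. -/
theorem muEx_minimal_not_locallyLipschitz :
    ContinuousOn muEx (Set.Ioo (-1 : ℝ) 1) ∧
    (∀ (τ : ℝ) (w : ℝ → ℝ),
      (∀ t ∈ Set.Ico (0 : ℝ) τ, w t ∈ Set.Ioo (-1 : ℝ) 1) →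
      w 0 = 0 →
      (∀ t ∈ Set.Ico (0 : ℝ) τ, HasDerivAt w (-muEx (w t)) t) →
      ∀ t ∈ Set.Ico (0 : ℝ) τ, 0 ≤ w t) ∧
    ¬ ∃ K : NNReal, ∃ s ∈ nhds (0 : ℝ), s ⊆ Set.Ioo (-1 : ℝ) 1 ∧
      LipschitzOnWith K muEx s :=
  ⟨continuous_muEx.continuousOn,
    fun _ _ _ hw0 hderiv _ ht => nonneg_of_hasDerivAt_neg_muEx hw0.ge hderiv ht,
    fun ⟨_, _, hs, _, hlip⟩ => not_lipschitzOnWith_muEx hs hlip⟩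
end
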